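/- arXiv:2503.10514 — 8 statements merged into one kernel-verified Lean document; each statement's English description precedes it below -/
import Mathlib

section
/- Let b : ω → ω satisfy b(n) ≥ 1 for all n and ∑_{k<ω} 1/b(k) < ∞. Then for every J ∈ 𝕀 and every h ∈ ∏b, the set {x ∈ ∏b : x ⊏• (J,h)} has Lb_b-measure zero. -/
/-!
Each event `x k = h k` has measure at most `1 / b k`, so the event that `x` meets `h` somewhere
in the `n`-th interval of the partition has measure at most the sum of `1 / b k` over that
interval. These bounds are summable in `n`, and `x ⊏• (J,h)` means that infinitely many of
these events occur, so the first Borel–Cantelli lemma gives measure zero.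
-/

open Cardinal Set Filter

/-- An interval partition of `ω` into consecutive finite non-empty intervals,
encoded by the strictly increasing sequence of endpoints starting at `0`:
the `n`-th interval is `[r n, r (n+1))`. -/
def IsIntervalPartition (r : ℕ → ℕ) : Prop := r 0 = 0 ∧ StrictMono r

/-- `f ⊏• (I,h)`: for all but finitely many `n` there is `k` in the `n`-th interval
`[r n, r (n+1))` of the partition with `f k = h k`. -/
def SqBullet {b : ℕ → ℕ} (f : ∀ n, Fin (b n)) (r : ℕ → ℕ) (h : ∀ n, Fin (b n)) : Prop :=
  ∀ᶠ n in atTop, ∃ k, r n ≤ k ∧ k < r (n + 1) ∧ f k = h k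

/-- `𝔟_b^eq`: the least size of a family `F ⊆ ∏b` not `⊏•`-dominated by any single
pair `(I,h) ∈ 𝕀 × ∏b`. -/
noncomputable def bEq (b : ℕ → ℕ) : Cardinal :=
  sInf {c : Cardinal | ∃ F : Set (∀ n, Fin (b n)), #F = c ∧
    ¬∃ r : ℕ → ℕ, ∃ h : ∀ n, Fin (b n), IsIntervalPartition r ∧ ∀ f ∈ F, SqBullet f r h}

/-- `𝔡_b^eq`: the least size of a family `D ⊆ 𝕀 × ∏b` which is `⊏•`-dominating. -/
noncomputable def dEq (b : ℕ → ℕ) : Cardinal :=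
  sInf {c : Cardinal | ∃ D : Set ((ℕ → ℕ) × (∀ n, Fin (b n))),
    (∀ p ∈ D, IsIntervalPartition p.1) ∧ #D = c ∧
    ∀ f : ∀ n, Fin (b n), ∃ p ∈ D, SqBullet f p.1 p.2}

open MeasureTheory
open scoped ENNReal

theorem ENNReal.tsum_sum_Ico_le_tsum {r : ℕ → ℕ} (hr : Monotone r) (f : ℕ → ℝ≥0∞) :
    ∑' n, ∑ k ∈ Finset.Ico (r n) (r (n + 1)), f k ≤ ∑' k, f k := by
  have partial_sum : ∀ N, ∑ n ∈ Finset.range N, ∑ k ∈ Finset.Ico (r n) (r (n + 1)), f k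
      = ∑ k ∈ Finset.Ico (r 0) (r N), f k := by
    intro N
    induction N with
    | zero => simp
    | succ N ih =>
      rw [Finset.sum_range_succ, ih,
        Finset.sum_Ico_consecutive _ (hr (Nat.zero_le N)) (hr (Nat.le_succ N))]
  rw [ENNReal.tsum_eq_iSup_nat]
  exact iSup_le fun N => partial_sum N ▸ ENNReal.sum_le_tsum _

section UniformProduct

variable {b : ℕ → ℕ} {μ : Measure (∀ n, Fin (b n))}

theorem measure_coord_eq_le_inv
    (hμ : ∀ (n : ℕ) (s : ∀ i, Fin (b i)),
      μ {x | ∀ i < n, x i = s i} = ∏ i ∈ Finset.range n, ((b i : ℝ≥0∞))⁻¹)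
    (h : ∀ n, Fin (b n)) (k : ℕ) :
    μ {x | x k = h k} ≤ ((b k : ℝ≥0∞))⁻¹ := by
  classical
  -- The event is the union of `∏ i < k, b i` cylinders of length `k + 1`, each of measure
  -- `∏ i ≤ k, 1 / b i`.
  let s : (∀ i : Fin k, Fin (b i)) → ∀ i, Fin (b i) :=
    fun c i => if hi : i < k then c ⟨i, hi⟩ else h i
  have cover : {x : ∀ n, Fin (b n) | x k = h k} ⊆
      ⋃ c, {x | ∀ i < k + 1, x i = s c i} := by
    intro x hx
    refine mem_iUnion.2 ⟨fun i => x i, fun i hi => ?_⟩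
    rcases Nat.lt_succ_iff_lt_or_eq.1 hi with hi | rfl
    · simp [s, hi]
    · simpa [s] using hx
  have card_eq : (Fintype.card (∀ i : Fin k, Fin (b i)) : ℝ≥0∞)
      = ∏ i ∈ Finset.range k, (b i : ℝ≥0∞) := by
    simp [Fintype.card_pi, Fin.prod_univ_eq_prod_range (fun i => (b i : ℝ≥0∞))]
  have mul_inv : ∀ i ∈ Finset.range k, (b i : ℝ≥0∞) * ((b i : ℝ≥0∞))⁻¹ = 1 := fun i _ =>
    ENNReal.mul_inv_cancel (Nat.cast_ne_zero.2 (h i).pos.ne') (ENNReal.natCast_ne_top _)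
  calc μ {x | x k = h k}
      ≤ ∑' c, μ {x | ∀ i < k + 1, x i = s c i} :=
        (measure_mono cover).trans (measure_iUnion_le _)
    _ = (Fintype.card (∀ i : Fin k, Fin (b i)) : ℝ≥0∞) *
          ∏ i ∈ Finset.range (k + 1), ((b i : ℝ≥0∞))⁻¹ := by
        rw [tsum_fintype]
        simp only [hμ, Finset.sum_const, nsmul_eq_mul, Finset.card_univ]
    _ = ((b k : ℝ≥0∞))⁻¹ := by
        rw [card_eq, Finset.prod_range_succ, ← mul_assoc, ← Finset.prod_mul_distrib,
          Finset.prod_congr rfl mul_inv, Finset.prod_const_one, one_mul]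

theorem measure_exists_coord_eq_le_sum
    (hμ : ∀ (n : ℕ) (s : ∀ i, Fin (b i)),
      μ {x | ∀ i < n, x i = s i} = ∏ i ∈ Finset.range n, ((b i : ℝ≥0∞))⁻¹)
    (h : ∀ n, Fin (b n)) (K : Finset ℕ) :
    μ {x | ∃ k ∈ K, x k = h k} ≤ ∑ k ∈ K, ((b k : ℝ≥0∞))⁻¹ := by
  have cover : {x : ∀ n, Fin (b n) | ∃ k ∈ K, x k = h k} = ⋃ k ∈ K, {x | x k = h k} := by
    ext x
    simp
  rw [cover]
  exact (measure_biUnion_finset_le _ _).trans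
    (Finset.sum_le_sum fun k _ => measure_coord_eq_le_inv hμ h k)

end UniformProduct

theorem sqBullet_set_null_general (b : ℕ → ℕ)
    (hsum : ∑' k, ((b k : ENNReal))⁻¹ ≠ ⊤)
    (μ : Measure (∀ n, Fin (b n)))
    (hμ : ∀ (n : ℕ) (s : ∀ i, Fin (b i)),
      μ {x | ∀ i < n, x i = s i} = ∏ i ∈ Finset.range n, ((b i : ENNReal))⁻¹)
    (r : ℕ → ℕ) (hr : IsIntervalPartition r) (h : ∀ n, Fin (b n)) :
    μ {x : ∀ n, Fin (b n) | SqBullet x r h} = 0 := by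
  let A : ℕ → Set (∀ n, Fin (b n)) := fun n => {x | ∃ k ∈ Finset.Ico (r n) (r (n + 1)), x k = h k}
  have summable : ∑' n, μ (A n) ≠ ⊤ := by
    refine ne_top_of_le_ne_top hsum ?_
    calc ∑' n, μ (A n)
        ≤ ∑' n, ∑ k ∈ Finset.Ico (r n) (r (n + 1)), ((b k : ℝ≥0∞))⁻¹ :=
          ENNReal.tsum_le_tsum fun n => measure_exists_coord_eq_le_sum hμ h _
      _ ≤ ∑' k, ((b k : ℝ≥0∞))⁻¹ := ENNReal.tsum_sum_Ico_le_tsum hr.2.monotone _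
  refine measure_mono_null (fun x hx => ?_) (measure_limsup_atTop_eq_zero summable)
  rw [mem_limsup_iff_frequently_mem]
  exact hx.frequently.mono fun n ⟨k, hk₁, hk₂, hk⟩ => ⟨k, Finset.mem_Ico.2 ⟨hk₁, hk₂⟩, hk⟩

/-- If `b(n) ≥ 1` for all `n` and `∑_{k<ω} 1/b(k) < ∞`, then for every interval
partition `J ∈ 𝕀` and every `h ∈ ∏b`, the set `{x ∈ ∏b : x ⊏• (J,h)}` has measure
zero with respect to the product probability measure `Lb_b` on `∏b` whose `n`-th
factor is uniform on `{0,…,b(n)−1}` (characterized by its values on cylinders). -/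
theorem sqBullet_set_null (b : ℕ → ℕ) (hb : ∀ n, 1 ≤ b n)
    (hsum : ∑' k, ((b k : ENNReal))⁻¹ ≠ ⊤)
    (μ : Measure (∀ n, Fin (b n))) [IsProbabilityMeasure μ]
    (hμ : ∀ (n : ℕ) (s : ∀ i, Fin (b i)),
      μ {x | ∀ i < n, x i = s i} = ∏ i ∈ Finset.range n, ((b i : ENNReal))⁻¹)
    (r : ℕ → ℕ) (hr : IsIntervalPartition r) (h : ∀ n, Fin (b n)) :
    μ {x : ∀ n, Fin (b n) | SqBullet x r h} = 0 :=
  sqBullet_set_null_general b hsum μ hμ r hr h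
end

section
/- Let b : ω → ω satisfy ∑_{k<ω} 1/b(k) < ∞, and let E denote the σ-ideal generated by the F_σ Lb_b-measure-zero subsets of ∏b (equivalently, the σ-ideal generated by the F_σ Lebesgue-null subsets of 2^ω or of [0,1]; the associated cardinal invariants coincide). Then 𝔟_b^eq ≤ non(E) and cov(E) ≤ 𝔡_b^eq. -/
open Cardinal Set Filter

open MeasureTheory

/-- Membership in the σ-ideal `E` generated by the `F_σ` `μ`-measure-zero subsets of a
topological measurable space: `X` is covered by countably many `F_σ` `μ`-null sets. -/
def MemESigmaIdeal {α : Type*} [TopologicalSpace α] [MeasurableSpace α] (μ : Measure α)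
    (X : Set α) : Prop :=
  ∃ C : ℕ → Set α,
    (∀ n, (∃ g : ℕ → Set α, (∀ m, IsClosed (g m)) ∧ C n = ⋃ m, g m) ∧ μ (C n) = 0) ∧
    X ⊆ ⋃ n, C n

/-- `non(E)` for the σ-ideal generated by `F_σ` `μ`-null sets. -/
noncomputable def nonE {α : Type*} [TopologicalSpace α] [MeasurableSpace α]
    (μ : Measure α) : Cardinal :=
  sInf {c : Cardinal | ∃ A : Set α, #A = c ∧ ¬MemESigmaIdeal μ A}

/-- `cov(E)` for the σ-ideal generated by `F_σ` `μ`-null sets. -/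
noncomputable def covE {α : Type*} [TopologicalSpace α] [MeasurableSpace α]
    (μ : Measure α) : Cardinal :=
  sInf {c : Cardinal | ∃ J : Set (Set α),
    (∀ A ∈ J, MemESigmaIdeal μ A) ∧ #J = c ∧ ⋃₀ J = Set.univ}

open Topology

/-! For an interval partition `r` and `h ∈ ∏b`, the set `{f | f ⊏• (r, h)}` is
`⋃ N, ⋂ n ≥ N, A n` with `A n = {f | ∃ k ∈ [r n, r (n+1)), f k = h k}`. Each `A n` is closed
and has measure at most `∑ k ∈ [r n, r (n+1)), 1 / b k`, a piece of the tail of a convergent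
series, so every `⋂ n ≥ N, A n` is a closed null set and `{f | f ⊏• (r, h)}` lies in `E`. Hence a
family outside `E` is not `⊏•`-bounded, and the sets `{f | f ⊏• p}` with `p` in a dominating
family `D` are at most `#D` members of `E` covering `∏b`. -/

namespace MemESigmaIdeal

variable {α : Type*} [TopologicalSpace α] [MeasurableSpace α] {μ : Measure α} {X Y : Set α}

lemma mono (hX : MemESigmaIdeal μ X) (hYX : Y ⊆ X) : MemESigmaIdeal μ Y :=
  let ⟨C, hC, hXC⟩ := hX
  ⟨C, hC, hYX.trans hXC⟩

lemma measure_eq_zero (hX : MemESigmaIdeal μ X) : μ X = 0 :=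
  let ⟨_, hC, hXC⟩ := hX
  measure_mono_null hXC (measure_iUnion_null fun n => (hC n).2)

end MemESigmaIdeal

lemma not_memESigmaIdeal_univ {α : Type*} [TopologicalSpace α] [MeasurableSpace α]
    (μ : Measure α) [NeZero μ] : ¬MemESigmaIdeal μ univ := fun h =>
  (Measure.measure_univ_ne_zero.mpr (NeZero.ne μ)) h.measure_eq_zero

lemma memESigmaIdeal_setOf_eventually_mem {α : Type*} [TopologicalSpace α]
    [MeasurableSpace α] {μ : Measure α} {A : ℕ → Set α} (hA : ∀ n, IsClosed (A n))
    (hμA : Tendsto (fun n => μ (A n)) atTop (𝓝 0)) :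
    MemESigmaIdeal μ {x | ∀ᶠ n in atTop, x ∈ A n} := by
  refine ⟨fun N => ⋂ n ≥ N, A n, fun N => ⟨⟨fun _ => ⋂ n ≥ N, A n,
    fun _ => isClosed_biInter fun n _ => hA n, (iUnion_const _).symm⟩, ?_⟩, ?_⟩
  · refine le_antisymm (ge_of_tendsto hμA ?_) zero_le
    filter_upwards [eventually_ge_atTop N] with n hn
    exact measure_mono (biInter_subset_of_mem hn)
  · intro x hx
    obtain ⟨N, hN⟩ := eventually_atTop.mp hx
    exact mem_iUnion.mpr ⟨N, mem_iInter₂.mpr hN⟩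

section Domination

variable {b : ℕ → ℕ} [TopologicalSpace (∀ n, Fin (b n))] [MeasurableSpace (∀ n, Fin (b n))]
  {μ : Measure (∀ n, Fin (b n))}
  (hdom : ∀ r h, IsIntervalPartition r → MemESigmaIdeal μ {f | SqBullet f r h})
include hdom

lemma bEq_le_nonE_of_forall_memESigmaIdeal (huniv : ¬MemESigmaIdeal μ univ) :
    bEq b ≤ nonE μ := by
  refine le_csInf ⟨_, univ, rfl, huniv⟩ ?_
  rintro c ⟨A, rfl, hA⟩
  refine csInf_le' ⟨A, rfl, ?_⟩
  rintro ⟨r, h, hr, hAdom⟩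
  exact hA ((hdom r h hr).mono hAdom)

lemma covE_le_dEq_of_forall_memESigmaIdeal : covE μ ≤ dEq b := by
  refine le_csInf ⟨_, range fun f => (id, f), ?_, rfl, fun f => ⟨(id, f), mem_range_self f,
    .of_forall fun n => ⟨n, le_rfl, n.lt_succ_self, rfl⟩⟩⟩ ?_
  · rintro _ ⟨f, rfl⟩
    exact ⟨rfl, strictMono_id⟩
  rintro c ⟨D, hD, rfl, hDdom⟩
  calc covE μ ≤ #((fun p => {f | SqBullet f p.1 p.2}) '' D) := csInf_le' ⟨_, ?_, rfl, ?_⟩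
    _ ≤ #D := mk_image_le
  · rintro _ ⟨p, hp, rfl⟩
    exact hdom p.1 p.2 (hD p hp)
  · exact eq_univ_of_forall fun f =>
      let ⟨p, hp, hf⟩ := hDdom f
      ⟨_, ⟨p, hp, rfl⟩, hf⟩

end Domination

lemma ENNReal.tendsto_sum_Ico_of_tsum_ne_top {a : ℕ → ENNReal} (ha : ∑' k, a k ≠ ⊤)
    {r t : ℕ → ℕ} (hr : Tendsto r atTop atTop) :
    Tendsto (fun n => ∑ k ∈ Finset.Ico (r n) (t n), a k) atTop (𝓝 0) := by
  refine tendsto_of_tendsto_of_tendsto_of_le_of_le tendsto_const_nhds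
    ((ENNReal.tendsto_sum_nat_add a ha).comp hr) (fun _ => zero_le) fun n => ?_
  calc ∑ k ∈ Finset.Ico (r n) (t n), a k
      = ∑ j ∈ Finset.range (t n - r n), a (j + r n) := by
        rw [Finset.sum_Ico_eq_sum_range]; simp only [add_comm]
    _ ≤ ∑' j, a (j + r n) := ENNReal.sum_le_tsum _

section UniformProduct

variable {b : ℕ → ℕ} {μ : Measure (∀ n, Fin (b n))}

lemma measurableSet_cylinder (n : ℕ) (s : ∀ i, Fin (b i)) :
    MeasurableSet {x : ∀ i, Fin (b i) | ∀ i < n, x i = s i} := by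
  simp only [ofPred_forall]
  exact .biInter (to_countable _) fun i _ => measurableSet_eq_fun (measurable_pi_apply i)
    measurable_const

lemma isClosed_setOf_exists_mem_eq (h : ∀ n, Fin (b n)) (s : Finset ℕ) :
    IsClosed {f : ∀ n, Fin (b n) | ∃ k ∈ s, f k = h k} := by
  have : {f : ∀ n, Fin (b n) | ∃ k ∈ s, f k = h k} = ⋃ k ∈ s, (fun f => f k) ⁻¹' {h k} := by
    ext; simp
  rw [this]
  exact s.finite_toSet.isClosed_biUnion fun k _ =>
    (isClosed_singleton (x := h k)).preimage (continuous_apply k)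

variable (hμ : ∀ (n : ℕ) (s : ∀ i, Fin (b i)),
  μ {x | ∀ i < n, x i = s i} = ∏ i ∈ Finset.range n, ((b i : ENNReal))⁻¹)
include hμ

/-- `{f | f k = c}` splits into the `∏ i < k, b i` cylinders of length `k + 1` that end in `c`. -/
lemma measure_setOf_apply_eq [NeZero μ] (k : ℕ) (c : Fin (b k)) :
    μ {f | f k = c} = ((b k : ENNReal))⁻¹ := by
  obtain ⟨f₀⟩ := μ.nonempty_of_neZero
  obtain ⟨s, hs_lt, hs_k⟩ : ∃ s : (∀ i : Fin k, Fin (b i)) → ∀ i, Fin (b i),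
      (∀ w (i : Fin k), s w i = w i) ∧ ∀ w, s w k = c :=
    ⟨fun w => Function.update (fun i => if hi : i < k then w ⟨i, hi⟩ else f₀ i) k c,
      fun w i => by simp [Function.update_of_ne i.isLt.ne, i.isLt],
      fun w => Function.update_self ..⟩
  have hunion : {f : ∀ n, Fin (b n) | f k = c} = ⋃ w, {x | ∀ i < k + 1, x i = s w i} := by
    ext f
    simp only [mem_ofPred_eq, mem_iUnion]
    constructor
    · intro hf
      refine ⟨fun i => f i, fun i hi => ?_⟩
      rcases Nat.lt_succ_iff_lt_or_eq.mp hi with hi | hik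
      · exact (hs_lt (fun i => f i) ⟨i, hi⟩).symm
      · rw [hik, hf, hs_k]
    · rintro ⟨w, hw⟩
      rw [hw k k.lt_succ_self, hs_k]
  have hdisj : Pairwise (Function.onFun Disjoint
      fun w => {x : ∀ n, Fin (b n) | ∀ i < k + 1, x i = s w i}) := by
    intro w w' hne
    refine disjoint_left.mpr fun x hx hx' => hne (funext fun i => ?_)
    rw [← hs_lt w i, ← hs_lt w' i, ← hx i (by omega), hx' i (by omega)]
  have hb (i) : (b i : ENNReal) ≠ 0 := by exact_mod_cast (f₀ i).pos.ne'
  rw [hunion, measure_iUnion hdisj fun w => measurableSet_cylinder _ _, tsum_fintype]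
  simp only [hμ, Finset.sum_const, Finset.card_univ, Fintype.card_pi, Fintype.card_fin,
    nsmul_eq_mul, Nat.cast_prod, Fin.prod_univ_eq_prod_range (fun i => (b i : ENNReal)),
    Finset.prod_range_succ, ← mul_assoc, ← Finset.prod_mul_distrib]
  simp [ENNReal.mul_inv_cancel (hb _) (ENNReal.natCast_ne_top _)]

lemma measure_setOf_exists_mem_eq_le [NeZero μ] (h : ∀ n, Fin (b n))
    (s : Finset ℕ) : μ {f | ∃ k ∈ s, f k = h k} ≤ ∑ k ∈ s, ((b k : ENNReal))⁻¹ :=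
  calc μ {f | ∃ k ∈ s, f k = h k} = μ (⋃ k ∈ s, {f | f k = h k}) := by congr 1; ext; simp
    _ ≤ ∑ k ∈ s, μ {f | f k = h k} := measure_biUnion_finset_le _ _
    _ = ∑ k ∈ s, ((b k : ENNReal))⁻¹ :=
      Finset.sum_congr rfl fun k _ => measure_setOf_apply_eq hμ k (h k)

lemma memESigmaIdeal_setOf_sqBullet [NeZero μ]
    (hsum : ∑' k, ((b k : ENNReal))⁻¹ ≠ ⊤) {r : ℕ → ℕ} (hr : StrictMono r)
    (h : ∀ n, Fin (b n)) : MemESigmaIdeal μ {f | SqBullet f r h} := by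
  have hA := memESigmaIdeal_setOf_eventually_mem (μ := μ)
    (A := fun n => {f | ∃ k ∈ Finset.Ico (r n) (r (n + 1)), f k = h k})
    (fun n => isClosed_setOf_exists_mem_eq h _)
    (tendsto_of_tendsto_of_tendsto_of_le_of_le tendsto_const_nhds
      (ENNReal.tendsto_sum_Ico_of_tsum_ne_top hsum hr.tendsto_atTop) (fun _ => zero_le)
      fun n => measure_setOf_exists_mem_eq_le hμ h _)
  simpa [SqBullet, and_assoc] using hA

end UniformProduct

/-- If `∑_{k<ω} 1/b(k) < ∞` then `𝔟_b^eq ≤ non(E)` and `cov(E) ≤ 𝔡_b^eq`, where `E` is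
the σ-ideal generated by the `F_σ` `Lb_b`-measure-zero subsets of `∏b` and `Lb_b` is
the product probability measure on `∏b` whose `n`-th factor is uniform on
`{0,…,b(n)−1}` (characterized on cylinders). -/
theorem bEq_le_nonE_covE_le_dEq (b : ℕ → ℕ)
    (hsum : ∑' k, ((b k : ENNReal))⁻¹ ≠ ⊤)
    (μ : Measure (∀ n, Fin (b n))) [IsProbabilityMeasure μ]
    (hμ : ∀ (n : ℕ) (s : ∀ i, Fin (b i)),
      μ {x | ∀ i < n, x i = s i} = ∏ i ∈ Finset.range n, ((b i : ENNReal))⁻¹) :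
    bEq b ≤ nonE μ ∧ covE μ ≤ dEq b := by
  have hdom (r h) (hr : IsIntervalPartition r) : MemESigmaIdeal μ {f | SqBullet f r h} :=
    memESigmaIdeal_setOf_sqBullet hμ hsum hr.2 h
  exact ⟨bEq_le_nonE_of_forall_memESigmaIdeal hdom (not_memESigmaIdeal_univ μ),
    covE_le_dEq_of_forall_memESigmaIdeal hdom⟩
end

section
/- Let b : ω → ω satisfy b(n) ≥ 1 for all n, and let J ∈ 𝕀 be such that ∑_{k∈J_n} 1/b(k) ≥ n for every n < ω. Then for every h ∈ ∏b, the set {x ∈ ∏b : x ⊏• (J,h)} has Lb_b-measure one, i.e. its complement in ∏b is Lb_b-null. -/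
open Cardinal Set Filter

open MeasureTheory

/-!
The complement of `{x | x ⊏• (J, h)}` is the set of `x` that miss `h` on the whole interval `J_n`
for infinitely many `n`. Under the uniform product measure the coordinates are independent and
`x k ≠ h k` has probability `1 - 1/b(k)`, so missing `h` on `J_n` has probability
`∏_{k ∈ J_n} (1 - 1/b(k)) ≤ exp (-∑_{k ∈ J_n} 1/b(k)) ≤ e⁻ⁿ`. These bounds are summable, and
Borel–Cantelli finishes the proof.
-/

theorem Real.prod_one_sub_le_exp_neg_sum {ι : Type*} (s : Finset ι) {f : ι → ℝ}
    (hf : ∀ i ∈ s, f i ≤ 1) : ∏ i ∈ s, (1 - f i) ≤ Real.exp (-∑ i ∈ s, f i) := by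
  rw [← Finset.sum_neg_distrib, Real.exp_sum]
  refine Finset.prod_le_prod (fun i hi => sub_nonneg.2 (hf i hi)) fun i _ => ?_
  linarith [Real.add_one_le_exp (-f i)]

theorem natCast_pred_mul_inv_eq_ofReal {m : ℕ} (hm : 1 ≤ m) :
    ((m - 1 : ℕ) : ENNReal) * ((m : ENNReal))⁻¹ = ENNReal.ofReal (1 - (m : ℝ)⁻¹) := by
  have hpos : (0 : ℝ) < m := by exact_mod_cast hm
  rw [← ENNReal.ofReal_natCast, ← ENNReal.ofReal_natCast m, ← ENNReal.ofReal_inv_of_pos hpos,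
    ← ENNReal.ofReal_mul (Nat.cast_nonneg _), Nat.cast_sub hm, Nat.cast_one, sub_mul,
    mul_inv_cancel₀ hpos.ne', one_mul]

theorem sum_inv_natCast_eq_ofReal {ι : Type*} (s : Finset ι) {m : ι → ℕ} (hm : ∀ i ∈ s, 1 ≤ m i) :
    ∑ i ∈ s, ((m i : ENNReal))⁻¹ = ENNReal.ofReal (∑ i ∈ s, ((m i : ℝ))⁻¹) := by
  rw [ENNReal.ofReal_sum_of_nonneg fun i _ => by positivity]
  refine Finset.sum_congr rfl fun i hi => ?_
  rw [ENNReal.ofReal_inv_of_pos (by exact_mod_cast hm i hi), ENNReal.ofReal_natCast]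

section UniformProduct

variable {b : ℕ → ℕ}

/-- The cylinder condition that characterizes `Lb_b`. -/
def IsUniformOnCylinders (μ : Measure (∀ n, Fin (b n))) : Prop :=
  ∀ (n : ℕ) (s : ∀ i, Fin (b i)),
    μ {x | ∀ i < n, x i = s i} = ∏ i ∈ Finset.range n, ((b i : ENNReal))⁻¹

variable {μ : Measure (∀ n, Fin (b n))}

theorem IsUniformOnCylinders.measure_restrict_range_preimage (hμ : IsUniformOnCylinders μ)
    (hb : ∀ n, 1 ≤ b n) (N : ℕ) (T : Finset ((i : Finset.range N) → Fin (b i))) :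
    μ ((Finset.range N).restrict ⁻¹' (T : Set ((i : Finset.range N) → Fin (b i)))) =
      T.card * ∏ i ∈ Finset.range N, ((b i : ENNReal))⁻¹ := by
  rw [← sum_measure_preimage_singleton T
    fun t _ => Finset.measurable_restrict _ (measurableSet_singleton t)]
  have hfiber (t : (i : Finset.range N) → Fin (b i)) :
      (Finset.range N).restrict (π := fun i => Fin (b i)) ⁻¹' {t} = {x : ∀ n, Fin (b n) |
        ∀ i < N, x i = if hi : i < N then t ⟨i, Finset.mem_range.2 hi⟩ else ⟨0, hb i⟩} := by
    ext x
    simp only [Set.mem_preimage, Set.mem_singleton_iff, funext_iff, Subtype.forall,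
      Finset.mem_range, Set.mem_ofPred_eq]
    exact forall₂_congr fun i hi => by simp [hi]
  simp only [hfiber]
  rw [Finset.sum_congr rfl fun t _ => hμ N _, Finset.sum_const, nsmul_eq_mul]

theorem IsUniformOnCylinders.measure_setOf_forall_mem_mem (hμ : IsUniformOnCylinders μ)
    (hb : ∀ n, 1 ≤ b n) (s : Finset ℕ) (S : ∀ i, Finset (Fin (b i))) :
    μ {x | ∀ i ∈ s, x i ∈ S i} = ∏ i ∈ s, ((S i).card : ENNReal) * ((b i : ENNReal))⁻¹ := by
  classical
  obtain ⟨N, hsN⟩ := Finset.exists_nat_subset_range s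
  set S' : ∀ i, Finset (Fin (b i)) := fun i => if i ∈ s then S i else Finset.univ
  have hset : {x : ∀ n, Fin (b n) | ∀ i ∈ s, x i ∈ S i} =
      (Finset.range N).restrict ⁻¹' Fintype.piFinset fun i : Finset.range N => S' i := by
    ext x
    simp only [Set.mem_ofPred_eq, Set.mem_preimage, Finset.mem_coe, Fintype.mem_piFinset,
      Finset.restrict, S', Subtype.forall, Finset.mem_range]
    refine ⟨fun hx i _ => ?_,
      fun hx i hi => by simpa [hi] using hx i (Finset.mem_range.1 (hsN hi))⟩
    split_ifs with hi
    exacts [hx i hi, Finset.mem_univ _]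
  have hfactor (i : ℕ) (hi : i ∉ s) : ((S' i).card : ENNReal) * ((b i : ENNReal))⁻¹ = 1 := by
    simpa [S', hi] using
      ENNReal.mul_inv_cancel (by exact_mod_cast Nat.one_le_iff_ne_zero.1 (hb i)) (by simp)
  rw [hset, hμ.measure_restrict_range_preimage hb, Fintype.card_piFinset, Nat.cast_prod,
    Finset.prod_coe_sort (Finset.range N) fun i => ((S' i).card : ENNReal),
    ← Finset.prod_mul_distrib, ← Finset.prod_subset hsN fun i _ hi => hfactor i hi]
  exact Finset.prod_congr rfl fun i hi => by simp [S', hi]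

theorem IsUniformOnCylinders.measure_setOf_forall_mem_ne_le (hμ : IsUniformOnCylinders μ)
    (hb : ∀ n, 1 ≤ b n) (s : Finset ℕ) (h : ∀ n, Fin (b n)) :
    μ {x | ∀ i ∈ s, x i ≠ h i} ≤ ENNReal.ofReal (Real.exp (-∑ i ∈ s, ((b i : ℝ))⁻¹)) := by
  have hset : {x : ∀ n, Fin (b n) | ∀ i ∈ s, x i ≠ h i} =
      {x | ∀ i ∈ s, x i ∈ ({h i}ᶜ : Finset _)} := by
    simp
  have hinv_le_one (i : ℕ) : ((b i : ℝ))⁻¹ ≤ 1 := inv_le_one_of_one_le₀ (by exact_mod_cast hb i)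
  rw [hset, hμ.measure_setOf_forall_mem_mem hb]
  simp only [Finset.card_compl, Finset.card_singleton, Fintype.card_fin]
  rw [Finset.prod_congr rfl fun i _ => natCast_pred_mul_inv_eq_ofReal (hb i),
    ← ENNReal.ofReal_prod_of_nonneg fun i _ => sub_nonneg.2 (hinv_le_one i)]
  exact ENNReal.ofReal_le_ofReal (Real.prod_one_sub_le_exp_neg_sum s fun i _ => hinv_le_one i)

end UniformProduct

theorem sqBullet_set_conull_general (b : ℕ → ℕ) (hb : ∀ n, 1 ≤ b n)
    (r : ℕ → ℕ)
    (hbig : ∀ n : ℕ, (n : ENNReal) ≤ ∑ k ∈ Finset.Ico (r n) (r (n + 1)), ((b k : ENNReal))⁻¹)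
    (μ : Measure (∀ n, Fin (b n)))
    (hμ : ∀ (n : ℕ) (s : ∀ i, Fin (b i)),
      μ {x | ∀ i < n, x i = s i} = ∏ i ∈ Finset.range n, ((b i : ENNReal))⁻¹)
    (h : ∀ n, Fin (b n)) :
    μ {x : ∀ n, Fin (b n) | SqBullet x r h}ᶜ = 0 := by
  have hμ : IsUniformOnCylinders μ := hμ
  set miss : ℕ → Set (∀ n, Fin (b n)) :=
    fun n => {x | ∀ k ∈ Finset.Ico (r n) (r (n + 1)), x k ≠ h k}
  have hbig_real (n : ℕ) : (n : ℝ) ≤ ∑ k ∈ Finset.Ico (r n) (r (n + 1)), ((b k : ℝ))⁻¹ := by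
    rw [← ENNReal.ofReal_le_ofReal_iff (by positivity), ENNReal.ofReal_natCast,
      ← sum_inv_natCast_eq_ofReal _ fun k _ => hb k]
    exact hbig n
  have hmiss (n : ℕ) : μ (miss n) ≤ ENNReal.ofReal (Real.exp (-n)) :=
    (hμ.measure_setOf_forall_mem_ne_le hb _ h).trans
      (ENNReal.ofReal_le_ofReal (Real.exp_le_exp.2 (neg_le_neg (hbig_real n))))
  have hsum : ∑' n, μ (miss n) ≠ ⊤ := by
    refine ne_top_of_le_ne_top ?_ (ENNReal.tsum_le_tsum hmiss)
    rw [← ENNReal.ofReal_tsum_of_nonneg (fun _ => (Real.exp_pos _).le) Real.summable_exp_neg_nat]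
    exact ENNReal.ofReal_ne_top
  convert measure_setOfPred_frequently_eq_zero hsum using 2
  ext x
  simp only [Set.mem_compl_iff, Set.mem_ofPred_eq, SqBullet, not_eventually, not_exists,
    Finset.mem_Ico, and_imp, not_and, ne_eq]

/-- If `b(n) ≥ 1` for all `n` and `J ∈ 𝕀` satisfies `∑_{k ∈ J_n} 1/b(k) ≥ n` for every
`n`, then for every `h ∈ ∏b` the set `{x ∈ ∏b : x ⊏• (J,h)}` has `Lb_b`-measure one,
i.e. its complement is null, where `Lb_b` is the product probability measure on `∏b`
whose `n`-th factor is uniform on `{0,…,b(n)−1}` (characterized on cylinders). -/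
theorem sqBullet_set_conull (b : ℕ → ℕ) (hb : ∀ n, 1 ≤ b n)
    (r : ℕ → ℕ) (hr : IsIntervalPartition r)
    (hbig : ∀ n : ℕ, (n : ENNReal) ≤ ∑ k ∈ Finset.Ico (r n) (r (n + 1)), ((b k : ENNReal))⁻¹)
    (μ : Measure (∀ n, Fin (b n))) [IsProbabilityMeasure μ]
    (hμ : ∀ (n : ℕ) (s : ∀ i, Fin (b i)),
      μ {x | ∀ i < n, x i = s i} = ∏ i ∈ Finset.range n, ((b i : ENNReal))⁻¹)
    (h : ∀ n, Fin (b n)) :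
    μ {x : ∀ n, Fin (b n) | SqBullet x r h}ᶜ = 0 :=
  sqBullet_set_conull_general b hb r hbig μ hμ h
end

section
/- Let b : ω → ω satisfy b(n) ≥ 2 for all n and ∑_{k<ω} 1/b(k) = ∞, and let N denote the ideal of Lb_b-measure-zero subsets of ∏b (equivalently, the Lebesgue-null ideal; the associated cardinal invariants coincide). Then cov(N) ≤ 𝔟_b^eq and 𝔡_b^eq ≤ non(N). -/
open Cardinal Set Filter

open MeasureTheory

/-- `cov(N)` for the ideal of `μ`-measure-zero sets. -/
noncomputable def covNull {α : Type*} [MeasurableSpace α] (μ : Measure α) : Cardinal :=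
  sInf {c : Cardinal | ∃ J : Set (Set α),
    (∀ A ∈ J, μ A = 0) ∧ #J = c ∧ ⋃₀ J = Set.univ}

/-- `non(N)` for the ideal of `μ`-measure-zero sets. -/
noncomputable def nonNull {α : Type*} [MeasurableSpace α] (μ : Measure α) : Cardinal :=
  sInf {c : Cardinal | ∃ A : Set α, #A = c ∧ μ A ≠ 0}

/-!
The cylinder condition pins `μ` down as the product `Lb_b` of uniform measures. Since
`∑ 1/b(k) = ∞`, there is an interval partition whose `n`-th interval carries `∑ 1/b(k) ≥ 2^n`;
a random `h` avoids a fixed `f` on that whole interval with probability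
`∏ (1 - 1/b(k)) ≤ (1 + ∑ 1/b(k))⁻¹ ≤ 2⁻ⁿ`, so by Borel–Cantelli `f ⊏• (I, h)` for almost every `h`.
Thus every set `{h | ¬ f ⊏• (I, h)}` is null: an unbounded family `F` gives a null cover of
size `|F|`, and a non-null set `A` gives the dominating family `{I} × A`.
-/

open ProbabilityTheory
open scoped ENNReal

namespace ENNReal

theorem prod_one_sub_mul_one_add_sum_le {ι : Type*} (s : Finset ι) {p : ι → ℝ≥0∞}
    (hp : ∀ i ∈ s, p i ≤ 1) : (∏ i ∈ s, (1 - p i)) * (1 + ∑ i ∈ s, p i) ≤ 1 := by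
  classical
  induction s using Finset.induction_on with
  | empty => simp
  | insert a s ha ih =>
    rw [Finset.prod_insert ha, Finset.sum_insert ha]
    have hpa := hp a (Finset.mem_insert_self a s)
    have hprod : ∏ i ∈ s, (1 - p i) ≤ 1 := Finset.prod_le_one' fun i _ => tsub_le_self
    calc (1 - p a) * (∏ i ∈ s, (1 - p i)) * (1 + (p a + ∑ i ∈ s, p i))
        = (1 - p a) * ((∏ i ∈ s, (1 - p i)) * (1 + ∑ i ∈ s, p i))
          + (1 - p a) * (∏ i ∈ s, (1 - p i)) * p a := by ring
      _ ≤ (1 - p a) * 1 + 1 * p a := by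
          gcongr
          · exact ih fun i hi => hp i (Finset.mem_insert_of_mem hi)
          · exact mul_le_one' tsub_le_self hprod
      _ = 1 := by rw [mul_one, one_mul, tsub_add_cancel_of_le hpa]

theorem prod_one_sub_le_inv_one_add_sum {ι : Type*} (s : Finset ι) {p : ι → ℝ≥0∞}
    (hp : ∀ i ∈ s, p i ≤ 1) : ∏ i ∈ s, (1 - p i) ≤ (1 + ∑ i ∈ s, p i)⁻¹ :=
  ENNReal.le_inv_iff_mul_le.2 (prod_one_sub_mul_one_add_sum_le s hp)

theorem exists_lt_le_sum_Ico {p : ℕ → ℝ≥0∞} (hp : ∑' k, p k = ∞) (hfin : ∀ k, p k ≠ ∞)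
    (a : ℕ) {M : ℝ≥0∞} (hM : M ≠ ∞) :
    ∃ c, a < c ∧ M ≤ ∑ k ∈ Finset.Ico a c, p k := by
  by_contra! hsmall
  have hbound : ∀ c, ∑ k ∈ Finset.range c, p k ≤ ∑ k ∈ Finset.range a, p k + M := fun c =>
    calc ∑ k ∈ Finset.range c, p k
        ≤ ∑ k ∈ Finset.range (a + c + 1), p k :=
          Finset.sum_le_sum_of_subset (Finset.range_subset_range.2 (by omega))
      _ = ∑ k ∈ Finset.range a, p k + ∑ k ∈ Finset.Ico a (a + c + 1), p k :=
          (Finset.sum_range_add_sum_Ico p (by omega)).symm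
      _ ≤ ∑ k ∈ Finset.range a, p k + M := by gcongr; exact (hsmall _ (by omega)).le
  have : ∑' k, p k < ∞ :=
    (ENNReal.tsum_eq_iSup_nat ▸ iSup_le hbound).trans_lt
      (ENNReal.add_lt_top.2 ⟨ENNReal.sum_lt_top.2 fun k _ => (hfin k).lt_top, hM.lt_top⟩)
  exact this.ne hp

end ENNReal

theorem exists_isIntervalPartition_le_sum_Ico {p : ℕ → ℝ≥0∞} (hp : ∑' k, p k = ∞)
    (hfin : ∀ k, p k ≠ ∞) {M : ℕ → ℝ≥0∞} (hM : ∀ n, M n ≠ ∞) :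
    ∃ r, IsIntervalPartition r ∧ ∀ n, M n ≤ ∑ k ∈ Finset.Ico (r n) (r (n + 1)), p k := by
  choose next hnext using fun n a => ENNReal.exists_lt_le_sum_Ico hp hfin a (hM n)
  let r : ℕ → ℕ := fun n => Nat.rec 0 next n
  exact ⟨r, ⟨rfl, strictMono_nat_of_lt_succ fun n => (hnext n (r n)).1⟩,
    fun n => (hnext n (r n)).2⟩

theorem uniformOn_univ_singleton {n : ℕ} [NeZero n] (a : Fin n) :
    uniformOn (univ : Set (Fin n)) {a} = (n : ℝ≥0∞)⁻¹ := by
  simp [uniformOn_univ]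

/-- The measure `Lb_b` on `∏b`. -/
noncomputable def uniformPi (b : ℕ → ℕ) : Measure (∀ n, Fin (b n)) :=
  Measure.infinitePi fun _ => uniformOn univ

section UniformPi

variable {b : ℕ → ℕ} [∀ n, NeZero (b n)]

theorem map_restrict_range_eq_pi {μ : Measure (∀ n, Fin (b n))}
    (hμ : ∀ (n : ℕ) (s : ∀ i, Fin (b i)),
      μ {x | ∀ i < n, x i = s i} = ∏ i ∈ Finset.range n, ((b i : ℝ≥0∞))⁻¹) (n : ℕ) :
    μ.map (Finset.range n).restrict =
      Measure.pi fun i : Finset.range n => uniformOn (univ : Set (Fin (b i))) := by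
  classical
  refine Measure.ext_of_singleton fun s => ?_
  let x : ∀ i, Fin (b i) := fun i => if h : i ∈ Finset.range n then s ⟨i, h⟩ else 0
  have hx : (Finset.range n).restrict ⁻¹' ({s} : Set (∀ i : Finset.range n, Fin (b i))) =
      {y | ∀ i < n, y i = x i} := by
    ext y
    simp +contextual [x, funext_iff]
  rw [Measure.map_apply (Finset.measurable_restrict _) (measurableSet_singleton s), hx, hμ,
    Measure.pi_singleton, ← Finset.prod_coe_sort]
  simp only [uniformOn_univ_singleton]

theorem eq_uniformPi {μ : Measure (∀ n, Fin (b n))}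
    (hμ : ∀ (n : ℕ) (s : ∀ i, Fin (b i)),
      μ {x | ∀ i < n, x i = s i} = ∏ i ∈ Finset.range n, ((b i : ℝ≥0∞))⁻¹) :
    μ = uniformPi b := by
  refine IsProjectiveLimit.unique (fun I => ?_) (Measure.isProjectiveLimit_infinitePi _)
  obtain ⟨n, hI⟩ := Finset.exists_nat_subset_range I
  rw [← Finset.restrict₂_comp_restrict hI, ← Measure.map_map (Finset.measurable_restrict₂ hI)
    (Finset.measurable_restrict _), map_restrict_range_eq_pi hμ]
  exact (isProjectiveMeasureFamily_pi (fun i => uniformOn (univ : Set (Fin (b i)))) _ _ hI).symm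

theorem uniformPi_pi_compl_singleton (s : Finset ℕ) (f : ∀ n, Fin (b n)) :
    uniformPi b (Set.pi s fun k => {f k}ᶜ) = ∏ k ∈ s, (1 - ((b k : ℝ≥0∞))⁻¹) := by
  rw [uniformPi, Measure.infinitePi_pi _ fun k _ => (measurableSet_singleton _).compl]
  refine Finset.prod_congr rfl fun k _ => ?_
  rw [prob_compl_eq_one_sub (measurableSet_singleton _), uniformOn_univ_singleton]

theorem ae_uniformPi_sqBullet (f : ∀ n, Fin (b n)) {r : ℕ → ℕ}
    (hr : ∀ n, 2 ^ n ≤ ∑ k ∈ Finset.Ico (r n) (r (n + 1)), ((b k : ℝ≥0∞))⁻¹) :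
    ∀ᵐ h ∂uniformPi b, SqBullet f r h := by
  have hblock : ∀ n, uniformPi b (Set.pi (Finset.Ico (r n) (r (n + 1))) fun k => {f k}ᶜ)
      ≤ 2⁻¹ ^ n := fun n =>
    calc _ = ∏ k ∈ Finset.Ico (r n) (r (n + 1)), (1 - ((b k : ℝ≥0∞))⁻¹) :=
          uniformPi_pi_compl_singleton _ f
      _ ≤ (1 + ∑ k ∈ Finset.Ico (r n) (r (n + 1)), ((b k : ℝ≥0∞))⁻¹)⁻¹ :=
          ENNReal.prod_one_sub_le_inv_one_add_sum _ fun k _ =>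
            ENNReal.inv_le_one.2 (Nat.one_le_cast.2 (NeZero.one_le))
      _ ≤ (2 ^ n)⁻¹ := ENNReal.inv_le_inv.2 ((hr n).trans le_add_self)
      _ = 2⁻¹ ^ n := ENNReal.inv_pow
  have hsum : ∑' n, uniformPi b (Set.pi (Finset.Ico (r n) (r (n + 1))) fun k => {f k}ᶜ) ≠ ∞ :=
    ne_top_of_le_ne_top (by simp [ENNReal.tsum_geometric]) (ENNReal.tsum_le_tsum hblock)
  filter_upwards [ae_eventually_notMem hsum] with h hh
  refine hh.mono fun n hn => ?_
  simpa [Set.mem_pi, eq_comm] using hn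

end UniformPi

theorem exists_not_sqBullet {b : ℕ → ℕ} (hb : ∀ n, 2 ≤ b n) (r : ℕ → ℕ) (h : ∀ n, Fin (b n)) :
    ∃ f, ¬SqBullet f r h := by
  have : ∀ n, ∃ a : Fin (b n), a ≠ h n := fun n =>
    haveI := Fin.nontrivial_iff_two_le.2 (hb n)
    exists_ne (h n)
  choose f hf using this
  refine ⟨f, fun hfr => ?_⟩
  obtain ⟨-, k, -, -, hk⟩ := hfr.exists
  exact hf k hk

section NullIdeal

variable {b : ℕ → ℕ} {μ : Measure (∀ n, Fin (b n))} {r : ℕ → ℕ}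

theorem covNull_le_bEq (hb : ∀ n, 2 ≤ b n) (hr : IsIntervalPartition r)
    (hae : ∀ f, ∀ᵐ h ∂μ, SqBullet f r h) : covNull μ ≤ bEq b := by
  refine le_csInf ⟨_, univ, rfl, fun ⟨r', h, _, hall⟩ => ?_⟩ ?_
  · obtain ⟨f, hf⟩ := exists_not_sqBullet hb r' h
    exact hf (hall f trivial)
  rintro _ ⟨F, rfl, hF⟩
  calc covNull μ ≤ #((fun f => {h | ¬SqBullet f r h}) '' F) := csInf_le' ⟨_, ?_, rfl, ?_⟩
    _ ≤ #F := mk_image_le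
  · rintro _ ⟨f, -, rfl⟩
    exact ae_iff.1 (hae f)
  · refine sUnion_eq_univ_iff.2 fun h => ?_
    by_contra! hcov
    exact hF ⟨r, h, hr, fun f hf => by simpa using hcov _ ⟨f, hf, rfl⟩⟩

theorem dEq_le_nonNull (hr : IsIntervalPartition r) (hae : ∀ f, ∀ᵐ h ∂μ, SqBullet f r h)
    (hμ : μ univ ≠ 0) : dEq b ≤ nonNull μ := by
  refine le_csInf ⟨_, univ, rfl, hμ⟩ ?_
  rintro _ ⟨A, rfl, hA⟩
  calc dEq b ≤ #((fun h => (r, h)) '' A) := csInf_le' ⟨_, ?_, rfl, fun f => ?_⟩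
    _ ≤ #A := mk_image_le
  · rintro _ ⟨h, -, rfl⟩
    exact hr
  · obtain ⟨h, hhA, hf⟩ :=
      Measure.exists_mem_of_measure_ne_zero_of_ae hA (ae_restrict_of_ae (hae f))
    exact ⟨(r, h), mem_image_of_mem _ hhA, hf⟩

end NullIdeal

theorem covNull_le_bEq_dEq_le_nonNull_general (b : ℕ → ℕ) (hb : ∀ n, 2 ≤ b n)
    (hsum : ∑' k, ((b k : ENNReal))⁻¹ = ⊤)
    (μ : Measure (∀ n, Fin (b n)))
    (hμ : ∀ (n : ℕ) (s : ∀ i, Fin (b i)),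
      μ {x | ∀ i < n, x i = s i} = ∏ i ∈ Finset.range n, ((b i : ENNReal))⁻¹) :
    covNull μ ≤ bEq b ∧ dEq b ≤ nonNull μ := by
  have : ∀ n, NeZero (b n) := fun n => ⟨by have := hb n; omega⟩
  obtain rfl := eq_uniformPi hμ
  obtain ⟨r, hr, hblocks⟩ := exists_isIntervalPartition_le_sum_Ico hsum
    (fun k => ENNReal.inv_ne_top.2 (NeZero.ne _)) (M := fun n => 2 ^ n)
    (fun n => ENNReal.pow_ne_top ENNReal.ofNat_ne_top)
  have hae := fun f => ae_uniformPi_sqBullet f hblocks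
  exact ⟨covNull_le_bEq hb hr hae, dEq_le_nonNull hr hae (by simp [uniformPi])⟩

/-- If `b(n) ≥ 2` for all `n` and `∑_{k<ω} 1/b(k) = ∞`, then `cov(N) ≤ 𝔟_b^eq` and
`𝔡_b^eq ≤ non(N)`, where `N` is the ideal of measure-zero sets of the product
probability measure `Lb_b` on `∏b` whose `n`-th factor is uniform on `{0,…,b(n)−1}`
(characterized on cylinders). -/
theorem covNull_le_bEq_dEq_le_nonNull (b : ℕ → ℕ) (hb : ∀ n, 2 ≤ b n)
    (hsum : ∑' k, ((b k : ENNReal))⁻¹ = ⊤)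
    (μ : Measure (∀ n, Fin (b n))) [IsProbabilityMeasure μ]
    (hμ : ∀ (n : ℕ) (s : ∀ i, Fin (b i)),
      μ {x | ∀ i < n, x i = s i} = ∏ i ∈ Finset.range n, ((b i : ENNReal))⁻¹) :
    covNull μ ≤ bEq b ∧ dEq b ≤ nonNull μ :=
  covNull_le_bEq_dEq_le_nonNull_general b hb hsum μ hμ
end

section
/- Let b : ω → ω satisfy b(n) ≥ 2 for all n. Then 𝔡_b^eq ≤ max{𝔟^aLc_{b,1}, 𝔡} and min{𝔡^aLc_{b,1}, 𝔟} ≤ 𝔟_b^eq, where 𝔟 and 𝔡 are the bounding and dominating numbers of (ω^ω, ≤*). -/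
open Cardinal Set Filter

/-- `𝔟^aLc_{b,1}`: the least size of a family `F ⊆ ∏b` such that every `y ∈ ∏b` is
infinitely often equal to some member of `F`. -/
noncomputable def bALc (b : ℕ → ℕ) : Cardinal :=
  sInf {c : Cardinal | ∃ F : Set (∀ n, Fin (b n)), #F = c ∧
    ∀ y : ∀ n, Fin (b n), ∃ x ∈ F, ∃ᶠ n in atTop, x n = y n}

/-- `𝔡^aLc_{b,1}`: the least size of a family `D ⊆ ∏b` such that every `x ∈ ∏b` is
eventually different from some member of `D`. -/
noncomputable def dALc (b : ℕ → ℕ) : Cardinal :=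
  sInf {c : Cardinal | ∃ D : Set (∀ n, Fin (b n)), #D = c ∧
    ∀ x : ∀ n, Fin (b n), ∃ y ∈ D, ∀ᶠ n in atTop, x n ≠ y n}

/-- The bounding number `𝔟` of `(ω^ω, ≤*)`. -/
noncomputable def frakB : Cardinal :=
  sInf {c : Cardinal | ∃ F : Set (ℕ → ℕ), #F = c ∧
    ¬∃ g : ℕ → ℕ, ∀ f ∈ F, ∀ᶠ n in atTop, f n ≤ g n}

/-- The dominating number `𝔡` of `(ω^ω, ≤*)`. -/
noncomputable def frakD : Cardinal :=
  sInf {c : Cardinal | ∃ D : Set (ℕ → ℕ), #D = c ∧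
    ∀ f : ℕ → ℕ, ∃ g ∈ D, ∀ᶠ n in atTop, f n ≤ g n}

/-!
If `x =^∞ y`, pick `t m ≥ m` with `x (t m) = y (t m)`. For any `g ≥* t`, let `r_g` be the
partition whose next endpoint always jumps past `g` of the current one; then eventually
`t (r_g n)` lies in `[r_g n, r_g (n+1))`, so `x ⊏• (r_g, y)`. Hence `(g, y) ↦ (r_g, y)` sends a
dominating family times an `=^∞`-covering family to a `⊏•`-dominating family; dually, if all
members of a family are `=^∞` to one `h` and their `t`'s are bounded by `g`, then `(r_g, h)`
`⊏•`-dominates the whole family.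
-/

def jumpPartition (g : ℕ → ℕ) : ℕ → ℕ
  | 0 => 0
  | n + 1 => max (jumpPartition g n + 1) (g (jumpPartition g n) + 1)

namespace jumpPartition

variable (g : ℕ → ℕ)

lemma lt_succ (n : ℕ) : jumpPartition g n < jumpPartition g (n + 1) :=
  (Nat.lt_succ_self _).trans_le (le_max_left _ _)

lemma apply_lt_succ (n : ℕ) : g (jumpPartition g n) < jumpPartition g (n + 1) :=
  (Nat.lt_succ_self _).trans_le (le_max_right _ _)

lemma isIntervalPartition : IsIntervalPartition (jumpPartition g) :=
  ⟨rfl, strictMono_nat_of_lt_succ (lt_succ g)⟩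

lemma self_le (n : ℕ) : n ≤ jumpPartition g n :=
  (isIntervalPartition g).2.le_apply

end jumpPartition

lemma exists_forall_sqBullet_jumpPartition {b : ℕ → ℕ} {f h : ∀ n, Fin (b n)}
    (hfh : ∃ᶠ n in atTop, f n = h n) :
    ∃ t : ℕ → ℕ, ∀ g : ℕ → ℕ, (∀ᶠ m in atTop, t m ≤ g m) →
      SqBullet f (jumpPartition g) h := by
  rw [frequently_atTop] at hfh
  choose t le_t eq_t using hfh
  refine ⟨t, fun g hg => ?_⟩
  obtain ⟨N, hN⟩ := eventually_atTop.1 hg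
  refine eventually_atTop.2 ⟨N, fun n hn => ⟨t (jumpPartition g n), le_t _, ?_, eq_t _⟩⟩
  calc t (jumpPartition g n)
      ≤ g (jumpPartition g n) := hN _ (hn.trans (jumpPartition.self_le g n))
    _ < jumpPartition g (n + 1) := jumpPartition.apply_lt_succ g n

lemma exists_dominating_mk_eq_frakD :
    ∃ D : Set (ℕ → ℕ), #D = frakD ∧ ∀ f : ℕ → ℕ, ∃ g ∈ D, ∀ᶠ n in atTop, f n ≤ g n :=
  csInf_mem (s := {c | ∃ D : Set (ℕ → ℕ), #D = c ∧
      ∀ f : ℕ → ℕ, ∃ g ∈ D, ∀ᶠ n in atTop, f n ≤ g n})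
    ⟨_, univ, rfl, fun f => ⟨f, mem_univ f, Eventually.of_forall fun _ => le_rfl⟩⟩

lemma exists_mk_eq_bALc (b : ℕ → ℕ) :
    ∃ F : Set (∀ n, Fin (b n)), #F = bALc b ∧
      ∀ y : ∀ n, Fin (b n), ∃ x ∈ F, ∃ᶠ n in atTop, x n = y n :=
  csInf_mem (s := {c | ∃ F : Set (∀ n, Fin (b n)), #F = c ∧
      ∀ y : ∀ n, Fin (b n), ∃ x ∈ F, ∃ᶠ n in atTop, x n = y n})
    ⟨_, univ, rfl, fun y => ⟨y, mem_univ y, Frequently.of_forall fun _ => rfl⟩⟩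

lemma infinite_of_dominating {D : Set (ℕ → ℕ)}
    (hD : ∀ f : ℕ → ℕ, ∃ g ∈ D, ∀ᶠ n in atTop, f n ≤ g n) : D.Infinite := by
  intro hfin
  obtain ⟨u, hu⟩ := hfin.bddAbove
  obtain ⟨g, hg, hug⟩ := hD (u + 1)
  obtain ⟨n, hn⟩ := hug.exists
  exact Nat.not_succ_le_self _ (hn.trans (hu hg n))

lemma aleph0_le_frakD : ℵ₀ ≤ frakD := by
  obtain ⟨D, hDcard, hD⟩ := exists_dominating_mk_eq_frakD
  rw [← hDcard, aleph0_le_mk_iff, infinite_coe_iff]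
  exact infinite_of_dominating hD

lemma dEq_le_mk_mul_mk {b : ℕ → ℕ} {D : Set (ℕ → ℕ)} {F : Set (∀ n, Fin (b n))}
    (hD : ∀ f : ℕ → ℕ, ∃ g ∈ D, ∀ᶠ n in atTop, f n ≤ g n)
    (hF : ∀ y : ∀ n, Fin (b n), ∃ x ∈ F, ∃ᶠ n in atTop, x n = y n) :
    dEq b ≤ #D * #F := by
  refine (csInf_le' ?_).trans (mk_image2_le (f := fun g y => (jumpPartition g, y)))
  refine ⟨_, ?_, rfl, fun f => ?_⟩
  · rintro _ ⟨g, -, y, -, rfl⟩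
    exact jumpPartition.isIntervalPartition g
  · obtain ⟨x, hx, hfx⟩ := hF f
    obtain ⟨t, ht⟩ := exists_forall_sqBullet_jumpPartition (hfx.mono fun _ => Eq.symm)
    obtain ⟨g, hg, htg⟩ := hD t
    exact ⟨_, mem_image2_of_mem hg hx, ht g htg⟩

lemma exists_frequently_eq_of_mk_lt_dALc {b : ℕ → ℕ} {F : Set (∀ n, Fin (b n))}
    (hF : #F < dALc b) : ∃ h : ∀ n, Fin (b n), ∀ f ∈ F, ∃ᶠ n in atTop, f n = h n := by
  by_contra! hcover
  refine (show dALc b ≤ #F from csInf_le' ⟨F, rfl, fun x => ?_⟩).not_gt hF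
  obtain ⟨y, hy, hxy⟩ := hcover x
  exact ⟨y, hy, hxy.mono fun _ => Ne.symm⟩

lemma exists_bound_of_mk_lt_frakB {F : Set (ℕ → ℕ)} (hF : #F < frakB) :
    ∃ g : ℕ → ℕ, ∀ f ∈ F, ∀ᶠ n in atTop, f n ≤ g n := by
  by_contra hunbounded
  exact (show frakB ≤ #F from csInf_le' ⟨F, rfl, hunbounded⟩).not_gt hF

lemma min_dALc_frakB_le_mk {b : ℕ → ℕ} {F : Set (∀ n, Fin (b n))}
    (hF : ¬∃ r : ℕ → ℕ, ∃ h : ∀ n, Fin (b n),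
      IsIntervalPartition r ∧ ∀ f ∈ F, SqBullet f r h) :
    min (dALc b) frakB ≤ #F := by
  by_contra! hlt
  rw [lt_min_iff] at hlt
  obtain ⟨h, hh⟩ := exists_frequently_eq_of_mk_lt_dALc hlt.1
  choose t ht using fun f : F => exists_forall_sqBullet_jumpPartition (hh f f.2)
  obtain ⟨g, hg⟩ := exists_bound_of_mk_lt_frakB (mk_range_le.trans_lt hlt.2)
  exact hF ⟨jumpPartition g, h, jumpPartition.isIntervalPartition g,
    fun f hf => ht ⟨f, hf⟩ g (hg _ ⟨⟨f, hf⟩, rfl⟩)⟩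

lemma exists_forall_ne {b : ℕ → ℕ} (hb : ∀ n, 2 ≤ b n) (h : ∀ n, Fin (b n)) :
    ∃ f : ∀ n, Fin (b n), ∀ k, f k ≠ h k := by
  have (k : ℕ) : Nontrivial (Fin (b k)) := Fin.nontrivial_iff_two_le.2 (hb k)
  choose f hf using fun k => exists_ne (h k)
  exact ⟨f, hf⟩

lemma not_forall_sqBullet {b : ℕ → ℕ} (hb : ∀ n, 2 ≤ b n) (r : ℕ → ℕ)
    (h : ∀ n, Fin (b n)) :
    ¬∀ f : ∀ n, Fin (b n), SqBullet f r h := by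
  intro hall
  obtain ⟨f, hf⟩ := exists_forall_ne hb h
  obtain ⟨_, k, -, -, hk⟩ := (hall f).exists
  exact hf k hk

/-- If `b(n) ≥ 2` for all `n`, then `𝔡_b^eq ≤ max{𝔟^aLc_{b,1}, 𝔡}` and
`min{𝔡^aLc_{b,1}, 𝔟} ≤ 𝔟_b^eq`. -/
theorem dEq_le_max_min_le_bEq (b : ℕ → ℕ) (hb : ∀ n, 2 ≤ b n) :
    dEq b ≤ max (bALc b) frakD ∧ min (dALc b) frakB ≤ bEq b := by
  constructor
  · obtain ⟨D, hDcard, hD⟩ := exists_dominating_mk_eq_frakD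
    obtain ⟨F, hFcard, hF⟩ := exists_mk_eq_bALc b
    calc dEq b ≤ #D * #F := dEq_le_mk_mul_mk hD hF
      _ = frakD * bALc b := by rw [hDcard, hFcard]
      _ ≤ max frakD (bALc b) := mul_le_max_of_aleph0_le_left aleph0_le_frakD
      _ = max (bALc b) frakD := max_comm _ _
  · refine le_csInf ⟨_, univ, rfl, ?_⟩ ?_
    · rintro ⟨r, h, -, hall⟩
      exact not_forall_sqBullet hb r h fun f => hall f (mem_univ f)
    · rintro _ ⟨F, rfl, hF⟩
      exact min_dALc_frakB_le_mk hF
end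

section
/- Let b : ω → ω satisfy b(n) ≥ 2 for all n. Then non(MA) ≤ 𝔟_b^eq and 𝔡_b^eq ≤ cov(MA), where MA is the ideal of meager-additive subsets of 2^ω. Consequently non(MA) ≤ min{𝔟_b^eq : b ∈ ω^ω with b(n) ≥ 2 for all n} and sup{𝔡_b^eq : b ∈ ω^ω with b(n) ≥ 2 for all n} ≤ cov(MA). -/
open Cardinal Set Filter

/-- The Cantor space `2^ω` as `ℕ → Bool`, a topological group under coordinatewise
addition mod 2 (i.e. pointwise `xor`). -/
abbrev Cantor : Type := ℕ → Bool

/-- The algebraic sum `A + X` of two subsets of `2^ω` (coordinatewise mod-2 addition). -/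
def cantorSum (A X : Set Cantor) : Set Cantor :=
  Set.image2 (fun a x => fun n => xor (a n) (x n)) A X

/-- `X ⊆ 2^ω` is meager-additive: `A + X` is meager for every meager `A`. -/
def IsMeagerAdditive (X : Set Cantor) : Prop :=
  ∀ A : Set Cantor, IsMeagre A → IsMeagre (cantorSum A X)

/-- `non(MA)`: the least cardinality of a non-meager-additive subset of `2^ω`. -/
noncomputable def nonMA : Cardinal :=
  sInf {c : Cardinal | ∃ Y : Set Cantor, #Y = c ∧ ¬IsMeagerAdditive Y}

/-- `cov(MA)`: the least cardinality of a family of meager-additive sets covering `2^ω`. -/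
noncomputable def covMA : Cardinal :=
  sInf {c : Cardinal | ∃ J : Set (Set Cantor),
    (∀ Y ∈ J, IsMeagerAdditive Y) ∧ #J = c ∧ ⋃₀ J = Set.univ}

/-!
Encode `f ∈ ∏b` as the point `oneHot b f` of `2^ω` which, on the `n`-th block of length `b n`,
is `1` exactly at position `f n`. The set `M` of points with a `0` in almost every block is meagre,
so `M + Y` is meagre when `Y` is meager-additive. A meagre subset of `2^ω` is missed by every point
that agrees with a fixed `w` on infinitely many intervals `I_i` of some partition coarsening the
blocks. For `y ∈ Y`, almost every `I_i` therefore contains a block on which `y` differs from `w`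
everywhere, and on such a block `w` determines `f n` when `y = oneHot b f`. So a single pair
`(I, h)` read off from `w` dominates every `f` encoded in `Y`; taking `Y` the image of a
non-dominated family, or each member of a cover by meager-additive sets, gives both inequalities.
-/

open PiNat

lemma IsIntervalPartition.exists_mem_Ico {r : ℕ → ℕ} (hr : IsIntervalPartition r) (k : ℕ) :
    ∃ i, k ∈ Ico (r i) (r (i + 1)) := by
  induction k with
  | zero =>
    have h01 := hr.2 (zero_lt_one' ℕ)
    rw [hr.1] at h01
    exact ⟨0, by simp [hr.1, h01]⟩
  | succ k ih =>
    obtain ⟨i, hik, hki⟩ := ih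
    rcases (Nat.add_one_le_of_lt hki).lt_or_eq with hlt | heq
    · exact ⟨i, by omega, hlt⟩
    · exact ⟨i + 1, heq.ge, by rw [heq]; exact hr.2 (Nat.lt_succ_self _)⟩

lemma eq_of_mem_Ico_of_monotone {r : ℕ → ℕ} (hr : Monotone r) {i j k : ℕ}
    (hi : k ∈ Ico (r i) (r (i + 1))) (hj : k ∈ Ico (r j) (r (j + 1))) : i = j := by
  by_contra hij
  exact (hr.pairwise_disjoint_on_Ico_succ hij).le_bot ⟨hi, hj⟩

lemma IsIntervalPartition.comp {p m : ℕ → ℕ} (hp : IsIntervalPartition p)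
    (hm : IsIntervalPartition m) : IsIntervalPartition (p ∘ m) :=
  ⟨by simp [hm.1, hp.1], hp.2.comp hm.2⟩

lemma Ico_subset_Ico_comp_of_mem {p m : ℕ → ℕ} (hp : Monotone p) {i n : ℕ}
    (hn : n ∈ Ico (m i) (m (i + 1))) : Ico (p n) (p (n + 1)) ⊆ Ico (p (m i)) (p (m (i + 1))) :=
  Ico_subset_Ico (hp hn.1) (hp hn.2)

def blockStart (b : ℕ → ℕ) (n : ℕ) : ℕ := ∑ i ∈ Finset.range n, b i

lemma isIntervalPartition_blockStart {b : ℕ → ℕ} (hb : ∀ n, 0 < b n) :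
    IsIntervalPartition (blockStart b) :=
  ⟨Finset.sum_range_zero b, strictMono_nat_of_lt_succ fun n => by
    simp [blockStart, Finset.sum_range_succ, hb n]⟩

lemma blockStart_add_mem_Ico (b : ℕ → ℕ) (n : ℕ) (u : Fin (b n)) :
    blockStart b n + u ∈ Ico (blockStart b n) (blockStart b (n + 1)) := by
  simp [blockStart, Finset.sum_range_succ, u.isLt]

open Classical in
noncomputable def oneHot (b : ℕ → ℕ) (f : ∀ n, Fin (b n)) : Cantor :=
  fun k => decide (k ∈ range fun n => blockStart b n + f n)

lemma oneHot_blockStart_add {b : ℕ → ℕ} (hb : ∀ n, 0 < b n) (f : ∀ n, Fin (b n)) (n : ℕ)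
    (u : Fin (b n)) : oneHot b f (blockStart b n + u) = decide (u = f n) := by
  have hmono := (isIntervalPartition_blockStart hb).2.monotone
  simp only [oneHot, mem_range, decide_eq_decide]
  constructor
  · rintro ⟨j, hj⟩
    obtain rfl : j = n := eq_of_mem_Ico_of_monotone hmono
      (hj ▸ blockStart_add_mem_Ico b j (f j)) (blockStart_add_mem_Ico b n u)
    exact Fin.ext (by omega)
  · rintro rfl
    exact ⟨n, rfl⟩

lemma exists_forall_eq_of_oneHot_ne {b : ℕ → ℕ} (hb : ∀ n, 0 < b n) (w : Cantor) :
    ∃ h : ∀ n, Fin (b n), ∀ f n,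
      (∀ k ∈ Ico (blockStart b n) (blockStart b (n + 1)), oneHot b f k ≠ w k) → f n = h n := by
  have hne : ∀ f n (u : Fin (b n)),
      (∀ k ∈ Ico (blockStart b n) (blockStart b (n + 1)), oneHot b f k ≠ w k) →
      (w (blockStart b n + u) = false ↔ u = f n) := fun f n u hf => by
    have := hf _ (blockStart_add_mem_Ico b n u)
    rw [oneHot_blockStart_add hb] at this
    by_cases hu : u = f n <;> simp_all
  choose h hh using fun n => show ∃ hn : Fin (b n), ∀ f,
      (∀ k ∈ Ico (blockStart b n) (blockStart b (n + 1)), oneHot b f k ≠ w k) → f n = hn by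
    by_cases hex : ∃ u : Fin (b n), w (blockStart b n + u) = false
    · obtain ⟨u, hu⟩ := hex
      exact ⟨u, fun f hf => ((hne f n u hf).1 hu).symm⟩
    · exact ⟨⟨0, hb n⟩, fun f hf => (hex ⟨f n, (hne f n (f n) hf).2 rfl⟩).elim⟩
  exact ⟨h, fun f n => hh n f⟩

section PiNat

variable {α : Type*} [TopologicalSpace α] [DiscreteTopology α]

lemma Dense.exists_mem_cylinder_subset {U : Set (ℕ → α)} (hd : Dense U) (hU : IsOpen U)
    (u : ℕ → α) (l : ℕ) : ∃ x l', l ≤ l' ∧ x ∈ cylinder u l ∧ cylinder x l' ⊆ U := by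
  obtain ⟨x, hxU, hxu⟩ := hd.exists_mem_open (isOpen_cylinder _ u l) ⟨u, self_mem_cylinder u l⟩
  obtain ⟨_, ⟨y, l₀, rfl⟩, hxy, hyU⟩ :=
    (isTopologicalBasis_cylinders _).exists_subset_of_mem_open hxU hU
  refine ⟨x, max l l₀, le_max_left _ _, hxu, (cylinder_anti x (le_max_right l l₀)).trans ?_⟩
  rwa [mem_cylinder_iff_eq.1 hxy]

/-- The pattern `v` is built by extending, one at a time, the finitely many prefixes of length
`l` into `U`. -/
lemma Dense.exists_eqOn_Ico_subset [Finite α] [Nonempty α] {U : Set (ℕ → α)} (hd : Dense U)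
    (hU : IsOpen U) (l : ℕ) : ∃ l' v, l ≤ l' ∧ {x | EqOn x v (Ico l l')} ⊆ U := by
  have key : ∀ S : Set (ℕ → α), S.Finite →
      ∃ l' v, l ≤ l' ∧ ∀ s ∈ S, ∀ x ∈ cylinder s l, EqOn x v (Ico l l') → x ∈ U := by
    intro S hS
    induction S, hS using Set.Finite.induction_on with
    | empty => exact ⟨l, Classical.arbitrary _, le_rfl, by simp⟩
    | @insert s S _ _ ih =>
      obtain ⟨l₁, v₁, hl₁, hv₁⟩ := ih
      obtain ⟨x₀, l₂, hl₂, hx₀, hx₀U⟩ :=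
        hd.exists_mem_cylinder_subset hU (fun k => if k < l then s k else v₁ k) l₁
      refine ⟨l₂, x₀, hl₁.trans hl₂, ?_⟩
      rintro t (rfl | ht) x hxt hx
      · refine hx₀U fun k hk => ?_
        by_cases hkl : k < l
        · simpa [hxt k hkl, hkl] using (hx₀ k (hkl.trans_le hl₁)).symm
        · exact hx ⟨not_lt.1 hkl, hk⟩
      · refine hv₁ t ht x hxt fun k hk => ?_
        simpa [hx ⟨hk.1, hk.2.trans_le hl₂⟩, not_lt.2 hk.1] using hx₀ k hk.2
  obtain ⟨l', v, hl', hv⟩ := key _ (finite_range fun (t : Fin l → α) k =>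
    if hk : k < l then t ⟨k, hk⟩ else Classical.arbitrary α)
  exact ⟨l', v, hl', fun x hx => hv _ ⟨fun k => x k, rfl⟩ x (fun k hk => by simp [hk]) hx⟩

theorem IsMeagre.exists_frequently_eqOn_notMem [Finite α] [Nonempty α] {A : Set (ℕ → α)}
    (hA : IsMeagre A) {p : ℕ → ℕ} (hp : IsIntervalPartition p) :
    ∃ m, IsIntervalPartition m ∧ ∃ w : ℕ → α, ∀ x,
      (∃ᶠ i in atTop, EqOn x w (Ico (p (m i)) (p (m (i + 1))))) → x ∉ A := by
  obtain ⟨_, htA, htG, htd⟩ := mem_residual.1 hA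
  obtain ⟨U, hUo, rfl⟩ := htG.eq_iInter_nat
  set V : ℕ → Set (ℕ → α) := fun i => ⋂₀ (U '' Iic i)
  have hVo : ∀ i, IsOpen (V i) := fun i =>
    ((finite_Iic i).image U).isOpen_sInter (forall_mem_image.2 fun j _ => hUo j)
  have hVd : ∀ i, Dense (V i) := fun i => ((finite_Iic i).image U).dense_sInter
    (forall_mem_image.2 fun j _ => hUo j)
    (forall_mem_image.2 fun j _ => htd.mono (iInter_subset U j))
  choose L v _ hL using fun i => (hVd i).exists_eqOn_Ico_subset (hVo i)
  -- each stage `m (i+1)` is chosen so that the pattern `v i` fits into the `i`-th interval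
  let m : ℕ → ℕ := fun i => Nat.rec 0 (fun i mi => max (mi + 1) (L i (p mi))) i
  have hm : IsIntervalPartition m :=
    ⟨rfl, strictMono_nat_of_lt_succ fun i => (Nat.lt_succ_self _).trans_le (le_max_left _ _)⟩
  have hq := hp.comp hm
  choose idx hidx using hq.exists_mem_Ico
  refine ⟨m, hm, fun k => v (idx k) (p (m (idx k))) k, fun x hx hxA => htA ?_ hxA⟩
  have hxV : ∀ i, EqOn x (fun k => v (idx k) (p (m (idx k))) k) (Ico (p (m i)) (p (m (i + 1)))) →
      x ∈ V i := fun i hxi => hL i _ fun k hk => by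
    have hLm : L i (p (m i)) ≤ p (m (i + 1)) := (le_max_right _ _).trans hp.2.le_apply
    have hki : k ∈ Ico (p (m i)) (p (m (i + 1))) := ⟨hk.1, hk.2.trans_le hLm⟩
    obtain rfl := eq_of_mem_Ico_of_monotone hq.2.monotone (hidx k) hki
    exact hxi hki
  refine mem_iInter.2 fun j => ?_
  obtain ⟨i, hji, hxi⟩ := frequently_atTop.1 hx j
  exact sInter_subset_of_mem (mem_image_of_mem U (mem_Iic.2 hji)) (hxV i hxi)

lemma isMeagre_setOf_eventually_exists_Ico_ne {p : ℕ → ℕ} (hp : StrictMono p) (a : α) :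
    IsMeagre {z : ℕ → α | ∀ᶠ n in atTop, ∃ k ∈ Ico (p n) (p (n + 1)), z k ≠ a} := by
  classical
  set W : ℕ → Set (ℕ → α) := fun N => ⋃ n ≥ N, (Ico (p n) (p (n + 1))).pi fun _ => {a}
  have hWo : ∀ N, IsOpen (W N) := fun N =>
    isOpen_biUnion fun n _ => isOpen_set_pi (finite_Ico _ _) fun _ _ => isOpen_discrete _
  have hWd : ∀ N, Dense (W N) := fun N => (isTopologicalBasis_cylinders _).dense_iff.2 <| by
    rintro _ ⟨x, l, rfl⟩ -
    set n := max N l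
    refine ⟨(Ico (p n) (p (n + 1))).piecewise (fun _ => a) x, fun k hk => ?_,
      mem_biUnion (le_max_left N l) fun k hk => piecewise_eq_of_mem _ _ _ hk⟩
    have hkn : k ∉ Ico (p n) (p (n + 1)) := fun h' =>
      (hk.trans_le ((le_max_right N l).trans hp.le_apply)).not_ge h'.1
    exact piecewise_eq_of_notMem _ _ _ hkn
  refine mem_of_superset ((countable_iInter_mem (ι := ℕ)).2 fun N =>
    residual_of_dense_open (hWo N) (hWd N)) fun z hz hzA => ?_
  have hfreq : ∃ᶠ n in atTop, ∀ k ∈ Ico (p n) (p (n + 1)), z k = a :=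
    frequently_atTop.2 fun N => by simpa [W] using mem_iInter.1 hz N
  obtain ⟨n, ⟨k, hk, hka⟩, hall⟩ := (Filter.Eventually.and_frequently hzA hfreq).exists
  exact hka (hall k hk)

end PiNat

lemma isMeagerAdditive_singleton (y : Cantor) : IsMeagerAdditive {y} := by
  intro A hA
  set φ : Cantor → Cantor := fun x n => xor (x n) (y n)
  have hφ : Function.Involutive φ := fun x => by simp [φ]
  have hc : Continuous φ := continuous_pi fun n =>
    (continuous_of_discreteTopology (f := fun t => xor t (y n))).comp (continuous_apply n)
  have ho : IsOpenMap φ := fun U hU => by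
    rw [image_eq_preimage_of_inverse hφ.leftInverse hφ.rightInverse]
    exact hU.preimage hc
  rw [cantorSum, image2_singleton_right,
    image_eq_preimage_of_inverse hφ.leftInverse hφ.rightInverse]
  exact hA.preimage_of_isOpenMap hc ho

/-- Otherwise `y` meets `w` in every block of infinitely many intervals `I_i`; flipping `y` there
by a point of `M` puts into `M + Y` a point agreeing with `w` on each of these `I_i`. -/
lemma eventually_exists_block_ne {p m : ℕ → ℕ} (hp : IsIntervalPartition p)
    (hm : IsIntervalPartition m) {Y : Set Cantor} {w : Cantor}
    (hw : ∀ x, (∃ᶠ i in atTop, EqOn x w (Ico (p (m i)) (p (m (i + 1))))) →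
      x ∉ cantorSum {z | ∀ᶠ n in atTop, ∃ k ∈ Ico (p n) (p (n + 1)), z k ≠ true} Y)
    {y : Cantor} (hy : y ∈ Y) :
    ∀ᶠ i in atTop, ∃ n ∈ Ico (m i) (m (i + 1)), ∀ k ∈ Ico (p n) (p (n + 1)), y k ≠ w k := by
  classical
  by_contra hcon
  rw [not_eventually] at hcon
  set bad : ℕ → Prop := fun i =>
    ¬∃ n ∈ Ico (m i) (m (i + 1)), ∀ k ∈ Ico (p n) (p (n + 1)), y k ≠ w k
  choose idx hidx using (hp.comp hm).exists_mem_Ico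
  have hidx_eq : ∀ {i k}, k ∈ Ico (p (m i)) (p (m (i + 1))) → idx k = i := fun hk =>
    eq_of_mem_Ico_of_monotone (hp.comp hm).2.monotone (hidx _) hk
  set z : Cantor := fun k => if bad (idx k) then xor (y k) (w k) else false
  have hz : ∀ᶠ n in atTop, ∃ k ∈ Ico (p n) (p (n + 1)), z k ≠ true := by
    refine Eventually.of_forall fun n => ?_
    obtain ⟨i, hni⟩ := hm.exists_mem_Ico n
    have hblock := Ico_subset_Ico_comp_of_mem hp.2.monotone hni
    by_cases hBad : bad i
    · obtain ⟨k, hk, hyw⟩ : ∃ k ∈ Ico (p n) (p (n + 1)), y k = w k := by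
        by_contra! h
        exact hBad ⟨n, hni, h⟩
      refine ⟨k, hk, ?_⟩
      simp only [z, hidx_eq (hblock hk), if_pos hBad, hyw, Bool.xor_self]
      exact Bool.false_ne_true
    · have hk : p n ∈ Ico (p n) (p (n + 1)) := ⟨le_rfl, hp.2 (Nat.lt_succ_self n)⟩
      exact ⟨p n, hk, by simp only [z, hidx_eq (hblock hk), if_neg hBad]; exact Bool.false_ne_true⟩
  refine hw (fun k => xor (z k) (y k)) (hcon.mono fun i hBad k hk => ?_)
    (mem_image2_of_mem (show z ∈ _ from hz) hy)
  simp only [z, hidx_eq hk, if_pos (show bad i from hBad)]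
  cases y k <;> cases w k <;> rfl

theorem IsMeagerAdditive.exists_sqBullet {b : ℕ → ℕ} (hb : ∀ n, 0 < b n) {Y : Set Cantor}
    (hY : IsMeagerAdditive Y) :
    ∃ r h, IsIntervalPartition r ∧ ∀ f : ∀ n, Fin (b n), oneHot b f ∈ Y → SqBullet f r h := by
  have hs := isIntervalPartition_blockStart hb
  obtain ⟨m, hm, w, hw⟩ :=
    (hY _ (isMeagre_setOf_eventually_exists_Ico_ne hs.2 true)).exists_frequently_eqOn_notMem hs
  obtain ⟨h, hh⟩ := exists_forall_eq_of_oneHot_ne hb w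
  refine ⟨m, h, hm, fun f hf => ?_⟩
  filter_upwards [eventually_exists_block_ne hs hm hw hf] with i ⟨n, hn, hne⟩
  exact ⟨n, hn.1, hn.2, hh f n hne⟩

lemma not_exists_sqBullet_univ {b : ℕ → ℕ} (hb : ∀ n, 2 ≤ b n) :
    ¬∃ r h, IsIntervalPartition r ∧ ∀ f ∈ (univ : Set (∀ n, Fin (b n))), SqBullet f r h := by
  rintro ⟨r, h, -, hdom⟩
  choose f hf using fun n => @exists_ne _ (Fin.nontrivial_iff_two_le.2 (hb n)) (h n)
  obtain ⟨_, k, -, -, hk⟩ := (hdom f trivial).exists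
  exact hf k hk

lemma nonMA_le_bEq {b : ℕ → ℕ} (hb : ∀ n, 2 ≤ b n) : nonMA ≤ bEq b := by
  obtain ⟨F, hF, hFdom⟩ := csInf_mem (⟨_, univ, rfl, not_exists_sqBullet_univ hb⟩ :
    {c : Cardinal | ∃ F : Set (∀ n, Fin (b n)), #F = c ∧
      ¬∃ r h, IsIntervalPartition r ∧ ∀ f ∈ F, SqBullet f r h}.Nonempty)
  have hMA : ¬IsMeagerAdditive (oneHot b '' F) := fun hMA => by
    obtain ⟨r, h, hr, hdom⟩ := hMA.exists_sqBullet fun n => zero_lt_two.trans_le (hb n)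
    exact hFdom ⟨r, h, hr, fun f hf => hdom f (mem_image_of_mem _ hf)⟩
  calc nonMA ≤ #(oneHot b '' F) := csInf_le' ⟨_, rfl, hMA⟩
    _ ≤ #F := mk_image_le
    _ = bEq b := hF

lemma dEq_le_covMA {b : ℕ → ℕ} (hb : ∀ n, 0 < b n) : dEq b ≤ covMA := by
  obtain ⟨J, hJ, hJc, hJcov⟩ := csInf_mem (⟨_, range fun y => {y},
    forall_mem_range.2 isMeagerAdditive_singleton, rfl,
    by rw [sUnion_range, iUnion_of_singleton]⟩ :
    {c : Cardinal | ∃ J : Set (Set Cantor),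
      (∀ Y ∈ J, IsMeagerAdditive Y) ∧ #J = c ∧ ⋃₀ J = Set.univ}.Nonempty)
  choose r h hr hdom using fun Y : J => (hJ Y Y.2).exists_sqBullet hb
  have hcover : ∀ f, ∃ p ∈ range fun Y : J => (r Y, h Y), SqBullet f p.1 p.2 := fun f => by
    obtain ⟨Y, hYJ, hfY⟩ : oneHot b f ∈ ⋃₀ J := hJcov ▸ mem_univ _
    exact ⟨_, mem_range_self ⟨Y, hYJ⟩, hdom _ f hfY⟩
  calc dEq b ≤ #(range fun Y : J => (r Y, h Y)) :=
        csInf_le' ⟨_, forall_mem_range.2 hr, rfl, hcover⟩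
    _ ≤ #J := mk_range_le
    _ = covMA := hJc

/-- For every `b` with `b(n) ≥ 2` for all `n`: `non(MA) ≤ 𝔟_b^eq` and `𝔡_b^eq ≤ cov(MA)`;
consequently `non(MA) ≤ min{𝔟_b^eq : b ≥ 2}` and `sup{𝔡_b^eq : b ≥ 2} ≤ cov(MA)`. -/
theorem nonMA_le_bEq_dEq_le_covMA (b : ℕ → ℕ) (hb : ∀ n, 2 ≤ b n) :
    nonMA ≤ bEq b ∧ dEq b ≤ covMA ∧
    nonMA ≤ sInf {c : Cardinal | ∃ b' : ℕ → ℕ, (∀ n, 2 ≤ b' n) ∧ bEq b' = c} ∧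
    sSup {c : Cardinal | ∃ b' : ℕ → ℕ, (∀ n, 2 ≤ b' n) ∧ dEq b' = c} ≤ covMA := by
  have hpos : ∀ {b' : ℕ → ℕ}, (∀ n, 2 ≤ b' n) → ∀ n, 0 < b' n :=
    fun hb' n => zero_lt_two.trans_le (hb' n)
  refine ⟨nonMA_le_bEq hb, dEq_le_covMA (hpos hb), le_csInf ⟨_, b, hb, rfl⟩ ?_,
    csSup_le ⟨_, b, hb, rfl⟩ ?_⟩
  · rintro _ ⟨b', hb', rfl⟩
    exact nonMA_le_bEq hb'
  · rintro _ ⟨b', hb', rfl⟩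
    exact dEq_le_covMA (hpos hb')
end

section
/- non(MA) = min{𝔟_b^eq : b ∈ ω^ω with b(n) ≥ 2 for all n}, where MA is the ideal of meager-additive subsets of 2^ω. -/
open Cardinal Set Filter

/-!
Every meagre subset of `2^ω` lies in a set `M(I, y)` (`blockMeager`) of points that disagree
with `y` on almost every interval of an interval partition `I`, and `M(I, y) + x = M(I, y + x)`.
Inclusions between such sets are rigid: `M(I, y) ⊆ M(J, v)` forces almost every interval of `J`
to contain an interval of `I` on which `v` agrees with `y`.

If `A + Y` is not meagre and `A ⊆ M(I, y)`, code each `x ∈ Y` by its restrictions to the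
intervals of `I`; a `⊏•`-bound `(J, h)` of the codes decodes to a `z` with
`A + Y ⊆ M(I ∘ J, y + z)`, so `𝔟_b^eq ≤ non(MA)` for the corresponding `b`.

Conversely, write each `f` of an unbounded `F ⊆ ∏ b` in unary on consecutive intervals of
lengths `b n`, forming `I`. If the codes were meager-additive, `M(I, 0) + codes ⊆ M(I ∘ J, v)`
for some `J`, hence `M(I, code f) ⊆ M(I ∘ J, v)` for each `f`, and by rigidity `v` decodes to
an `h` with `f ⊏• (J, h)` for all `f ∈ F`.
-/

open PiNat (cylinder mem_cylinder_iff self_mem_cylinder)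

lemma exists_cylinder_subset {E : ℕ → Type*} [∀ n, TopologicalSpace (E n)]
    [∀ n, DiscreteTopology (E n)] {U : Set (∀ n, E n)} (hU : IsOpen U) {x : ∀ n, E n}
    (hx : x ∈ U) : ∃ n, cylinder x n ⊆ U := by
  obtain ⟨_, ⟨z, n, rfl⟩, hxz, hsub⟩ :=
    (PiNat.isTopologicalBasis_cylinders E).exists_subset_of_mem_open hx hU
  exact ⟨n, by rwa [PiNat.mem_cylinder_iff_eq.mp hxz]⟩

def blockIndex (r : ℕ → ℕ) (j : ℕ) : ℕ := Nat.findGreatest (fun n => r n ≤ j) j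

lemma blockIndex_eq {r : ℕ → ℕ} (hr : StrictMono r) {n j : ℕ}
    (hj : j ∈ Ico (r n) (r (n + 1))) : blockIndex r j = n :=
  Nat.findGreatest_eq_iff.mpr ⟨hr.le_apply.trans hj.1, fun _ => hj.1,
    fun _ hnk _ hk => (hj.2.trans_le (hr.monotone hnk)).not_ge hk⟩

def blockMeager (r : ℕ → ℕ) (y : Cantor) : Set Cantor :=
  {x | ∀ᶠ n in atTop, ¬EqOn x y (Ico (r n) (r (n + 1)))}

lemma isMeagre_blockMeager {r : ℕ → ℕ} (hr : StrictMono r) (y : Cantor) :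
    IsMeagre (blockMeager r y) := by
  let E : ℕ → Set Cantor := fun n => {x | EqOn x y (Ico (r n) (r (n + 1)))}
  have hE_open : ∀ n, IsOpen (E n) := fun n => isOpen_iff_forall_mem_open.mpr fun x hx =>
    ⟨cylinder x (r (n + 1)), fun z hz i hi => (mem_cylinder_iff.mp hz i hi.2).trans (hx hi),
      PiNat.isOpen_cylinder _ x _, self_mem_cylinder x _⟩
  have hE_dense : ∀ m, Dense (⋃ n ≥ m, E n) := by
    refine fun m => dense_iff_inter_open.mpr fun V hV ⟨z, hz⟩ => ?_
    obtain ⟨N, hN⟩ := exists_cylinder_subset hV hz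
    let n := max m N
    refine ⟨fun i => if i < r n then z i else y i, hN (mem_cylinder_iff.mpr fun i hi => ?_),
      mem_iUnion₂.mpr ⟨n, le_max_left _ _, fun i hi => if_neg (not_lt.mpr hi.1)⟩⟩
    exact if_pos (hi.trans_le ((le_max_right m N).trans hr.le_apply))
  have hcompl : (blockMeager r y)ᶜ = ⋂ m, ⋃ n ≥ m, E n := by
    ext x
    simp [blockMeager, E]
  rw [IsMeagre, hcompl]
  exact countable_iInter_mem.mpr fun m =>
    residual_of_dense_open (isOpen_biUnion fun n _ => hE_open n) (hE_dense m)

lemma IsOpen.exists_eqOn_Ico_imp_mem_of_finite {U : Set Cantor} (hU : IsOpen U) (hd : Dense U)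
    (m : ℕ) {T : Set Cantor} (hT : T.Finite) :
    ∃ σ : Cantor, ∃ M, ∀ t ∈ T, ∀ x ∈ cylinder t m, EqOn x σ (Ico m M) → x ∈ U := by
  induction T, hT using Set.Finite.induction_on with
  | empty => exact ⟨fun _ => false, 0, by simp⟩
  | @insert t T _ _ ih =>
    obtain ⟨σ, M, hσ⟩ := ih
    let p : Cantor := fun i => if i < m then t i else σ i
    obtain ⟨q, hqp, hqU⟩ := hd.inter_open_nonempty (cylinder p (max m M))
      (PiNat.isOpen_cylinder _ _ _) ⟨p, self_mem_cylinder _ _⟩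
    obtain ⟨M', hM'⟩ := exists_cylinder_subset hU hqU
    refine ⟨q, max M M', fun t' ht' x hxt hxq => ?_⟩
    rcases ht' with rfl | ht'
    · refine hM' (mem_cylinder_iff.mpr fun i hi => ?_)
      rcases lt_or_ge i m with him | him
      · rw [mem_cylinder_iff.mp hxt i him, mem_cylinder_iff.mp hqp i (lt_max_of_lt_left him)]
        simp [p, him]
      · exact hxq ⟨him, lt_max_of_lt_right hi⟩
    · refine hσ t' ht' x hxt fun i hi => ?_
      rw [hxq ⟨hi.1, lt_max_of_lt_left hi.2⟩,
        mem_cylinder_iff.mp hqp i (lt_max_of_lt_right hi.2)]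
      simp [p, not_lt.mpr hi.1]

lemma IsOpen.exists_eqOn_Ico_imp_mem {U : Set Cantor} (hU : IsOpen U) (hd : Dense U) (m : ℕ) :
    ∃ σ : Cantor, ∃ M, ∀ x, EqOn x σ (Ico m M) → x ∈ U := by
  let extend : (Fin m → Bool) → Cantor := fun p i => if h : i < m then p ⟨i, h⟩ else false
  obtain ⟨σ, M, hσ⟩ := hU.exists_eqOn_Ico_imp_mem_of_finite hd m (Set.finite_range extend)
  exact ⟨σ, M, fun x hx =>
    hσ _ ⟨fun i => x i, rfl⟩ x (mem_cylinder_iff.mpr fun i hi => by simp [extend, hi]) hx⟩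

theorem IsMeagre.exists_subset_blockMeager {A : Set Cantor} (hA : IsMeagre A) {r : ℕ → ℕ}
    (hr : StrictMono r) : ∃ s : ℕ → ℕ, ∃ y : Cantor, IsIntervalPartition s ∧
      A ⊆ blockMeager (r ∘ s) y := by
  obtain ⟨S, hS_open, hS_dense, hS_countable, hS⟩ := mem_residual_iff.mp hA
  obtain ⟨U, hU⟩ := (hS_countable.insert Set.univ).exists_eq_range (insert_nonempty _ _)
  have hU_mem : ∀ n, U n ∈ insert Set.univ S := fun n => hU ▸ mem_range_self n
  have hU_open : ∀ n, IsOpen (U n) := fun n =>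
    (hU_mem n).elim (fun h => h ▸ isOpen_univ) (hS_open _)
  have hU_dense : ∀ n, Dense (U n) := fun n =>
    (hU_mem n).elim (fun h => h ▸ dense_univ) (hS_dense _)
  choose σ M hσM using fun n => IsOpen.exists_eqOn_Ico_imp_mem
    ((Set.finite_le_nat n).isOpen_biInter fun k _ => hU_open k)
    (dense_biInter_of_isOpen (fun k _ => hU_open k) (Set.finite_le_nat n).countable
      fun k _ => hU_dense k)
  -- block `n` is long enough to carry the pattern forcing `⋂ k ≤ n, U k`
  let s : ℕ → ℕ := fun n => Nat.rec 0 (fun n sn => max (sn + 1) (M n (r sn))) n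
  have hs_succ : ∀ n, s (n + 1) = max (s n + 1) (M n (r (s n))) := fun n => rfl
  have hs : StrictMono s := strictMono_nat_of_lt_succ fun n =>
    (hs_succ n).symm ▸ lt_max_of_lt_left (lt_add_one _)
  let y : Cantor := fun i => σ (blockIndex (r ∘ s) i) (r (s (blockIndex (r ∘ s) i))) i
  refine ⟨s, y, ⟨rfl, hs⟩, fun x hxA => ?_⟩
  obtain ⟨N, hxN⟩ : ∃ N, x ∉ U N := by
    obtain ⟨t, ht, hxt⟩ : ∃ t ∈ S, x ∉ t := by
      simpa [Set.mem_sInter] using mt (@hS x) (not_not.mpr hxA)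
    obtain ⟨N, rfl⟩ : t ∈ range U := hU ▸ mem_insert_of_mem _ ht
    exact ⟨N, hxt⟩
  filter_upwards [eventually_ge_atTop N] with n hn hxy
  refine hxN (mem_iInter₂.mp (hσM n (r (s n)) x fun i hi => ?_) N hn)
  have hM : M n (r (s n)) ≤ r (s (n + 1)) := by
    rw [hs_succ]
    exact (le_max_right _ _).trans hr.le_apply
  have hi_block : i ∈ Ico ((r ∘ s) n) ((r ∘ s) (n + 1)) := ⟨hi.1, hi.2.trans_le hM⟩
  rw [hxy hi_block]
  simp only [y, blockIndex_eq (hr.comp hs) hi_block]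

theorem cantorSum_subset_blockMeager {r s : ℕ → ℕ} (hr : Monotone r) (hs : StrictMono s)
    {A Y : Set Cantor} {y z : Cantor} (hA : A ⊆ blockMeager r y)
    (hY : ∀ x ∈ Y, ∀ᶠ m in atTop,
      ∃ k, s m ≤ k ∧ k < s (m + 1) ∧ EqOn x z (Ico (r k) (r (k + 1)))) :
    cantorSum A Y ⊆ blockMeager (r ∘ s) (fun i => xor (y i) (z i)) := by
  rintro _ ⟨a, ha, x, hx, rfl⟩
  obtain ⟨K, hK⟩ := eventually_atTop.mp (hA ha)
  filter_upwards [hY x hx, eventually_ge_atTop K] with m ⟨k, hk₁, hk₂, hxz⟩ hKm hsum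
  refine hK k (hKm.trans (hs.le_apply.trans hk₁)) fun i hi => ?_
  have hi' : i ∈ Ico ((r ∘ s) m) ((r ∘ s) (m + 1)) :=
    ⟨(hr hk₁).trans hi.1, hi.2.trans_le (hr hk₂)⟩
  have h : xor (a i) (x i) = xor (y i) (z i) := hsum hi'
  rw [hxz hi] at h
  exact Bool.xor_left_inj.mp h

lemma exists_seq_of_frequently {P : ℕ → Prop} (hP : ∃ᶠ n in atTop, P n) (g : ℕ → ℕ) :
    ∃ N : ℕ → ℕ, (∀ j, P (N j)) ∧ ∀ j, g (N j) ≤ N (j + 1) := by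
  choose h hge hh using frequently_atTop.mp hP
  refine ⟨fun j => Nat.rec (h 0) (fun _ n => h (g n)) j, fun j => ?_, fun j => hge _⟩
  cases j <;> exact hh _

theorem eventually_exists_eqOn_of_blockMeager_subset {r t : ℕ → ℕ} (hr : StrictMono r)
    (ht : StrictMono t) {y v : Cantor} (H : blockMeager r y ⊆ blockMeager t v) :
    ∀ᶠ n in atTop, ∃ k, t n ≤ r k ∧ r (k + 1) ≤ t (n + 1) ∧ EqOn v y (Ico (r k) (r (k + 1))) := by
  classical
  by_contra hbad
  -- take sparse bad `t`-blocks, no `r`-block meeting two of them; a point `a` following `v` on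
  -- them and `¬y` elsewhere lies in `blockMeager r y` but not in `blockMeager t v`
  obtain ⟨N, hN_bad, hN_gap⟩ :=
    exists_seq_of_frequently (not_eventually.mp hbad) fun n => r (t (n + 1))
  have hN : StrictMono N := strictMono_nat_of_lt_succ fun j =>
    (lt_add_one _).trans_le (ht.le_apply.trans (hr.le_apply.trans (hN_gap j)))
  have hgap : ∀ j, r (t (N j + 1)) ≤ t (N (j + 1)) := fun j => (hN_gap j).trans ht.le_apply
  let D : Set ℕ := ⋃ j, Ico (t (N j)) (t (N j + 1))
  let a : Cantor := fun i => if i ∈ D then v i else !y i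
  have ha : a ∈ blockMeager r y := Eventually.of_forall fun k hk => by
    have hD : ∀ i ∈ Ico (r k) (r (k + 1)), i ∈ D := fun i hi => by
      by_contra hiD
      simpa [a, hiD] using hk hi
    obtain ⟨j, hj⟩ := mem_iUnion.mp (hD (r k) ⟨le_rfl, hr (lt_add_one k)⟩)
    rcases le_or_gt (r (k + 1)) (t (N j + 1)) with hin | hout
    · exact hN_bad j ⟨k, hj.1, hin, fun i hi => (if_pos (hD i hi)).symm.trans (hk hi)⟩
    · obtain ⟨j', hj'⟩ := mem_iUnion.mp (hD _ ⟨hj.2.le, hout⟩)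
      have hend : r (k + 1) ≤ t (N (j + 1)) :=
        (hr.monotone (hr.le_apply.trans_lt hj.2)).trans (hgap j)
      rcases le_or_gt j' j with hj'j | hjj'
      · exact hj'.2.not_ge (ht.monotone (Nat.succ_le_succ (hN.monotone hj'j)))
      · exact (hj'.1.trans_lt hout).not_ge (hend.trans (ht.monotone (hN.monotone hjj')))
  obtain ⟨M, hM⟩ := eventually_atTop.mp (H ha)
  exact hM (N M) hN.le_apply fun i hi => if_pos (mem_iUnion.mpr ⟨M, hi⟩)

noncomputable def bitsEquiv (ℓ : ℕ) : (Fin ℓ → Bool) ≃ Fin (2 ^ ℓ) :=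
  Fintype.equivFinOfCardEq (by simp)

noncomputable def blockCode (r : ℕ → ℕ) (x : Cantor) (n : ℕ) : Fin (2 ^ (r (n + 1) - r n)) :=
  bitsEquiv _ fun i => x (r n + i)

noncomputable def blockDecode (r : ℕ → ℕ) (c : ∀ n, Fin (2 ^ (r (n + 1) - r n))) : Cantor :=
  fun j =>
    let n := blockIndex r j
    if h : j - r n < r (n + 1) - r n then
      (bitsEquiv _).symm (c n) ⟨j - r n, h⟩
    else false

lemma eqOn_blockDecode {r : ℕ → ℕ} (hr : StrictMono r) {x : Cantor}
    {c : ∀ n, Fin (2 ^ (r (n + 1) - r n))} {n : ℕ} (h : blockCode r x n = c n) :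
    EqOn x (blockDecode r c) (Ico (r n) (r (n + 1))) := by
  intro j hj
  have hlt : j - r n < r (n + 1) - r n := Nat.sub_lt_sub_right hj.1 hj.2
  simp only [blockDecode]
  rw [blockIndex_eq hr hj, dif_pos hlt, ← h, blockCode, Equiv.symm_apply_apply]
  exact congrArg x (Nat.add_sub_cancel' hj.1).symm

def blockStarts (b : ℕ → ℕ) (n : ℕ) : ℕ := ∑ i ∈ Finset.range n, b i

lemma blockStarts_succ (b : ℕ → ℕ) (n : ℕ) : blockStarts b (n + 1) = blockStarts b n + b n :=
  Finset.sum_range_succ _ _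

lemma strictMono_blockStarts {b : ℕ → ℕ} (hb : ∀ n, 0 < b n) : StrictMono (blockStarts b) :=
  strictMono_nat_of_lt_succ fun n => by
    rw [blockStarts_succ]
    exact Nat.lt_add_of_pos_right (hb n)

def unaryCode (b : ℕ → ℕ) (f : ∀ n, Fin (b n)) : Cantor := fun j =>
  let n := blockIndex (blockStarts b) j
  decide (j = blockStarts b n + f n)

lemma unaryCode_apply {b : ℕ → ℕ} (hb : ∀ n, 0 < b n) (f : ∀ n, Fin (b n)) {n : ℕ}
    (i : Fin (b n)) : unaryCode b f (blockStarts b n + i) = decide (i = f n) := by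
  have hi : blockStarts b n + i ∈ Ico (blockStarts b n) (blockStarts b (n + 1)) := by
    rw [blockStarts_succ]
    exact ⟨Nat.le_add_right _ _, Nat.add_lt_add_left i.isLt _⟩
  simp only [unaryCode]
  rw [blockIndex_eq (strictMono_blockStarts hb) hi]
  simp [Fin.val_inj]

open Classical in
noncomputable def unaryDecode {b : ℕ → ℕ} (hb : ∀ n, 0 < b n) (u : Cantor) (n : ℕ) :
    Fin (b n) :=
  if h : ∃ i : Fin (b n), u (blockStarts b n + i) = true then h.choose else ⟨0, hb n⟩

lemma unaryDecode_eq {b : ℕ → ℕ} (hb : ∀ n, 0 < b n) {f : ∀ n, Fin (b n)} {u : Cantor} {n : ℕ}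
    (h : EqOn (unaryCode b f) u (Ico (blockStarts b n) (blockStarts b (n + 1)))) :
    unaryDecode hb u n = f n := by
  have hu : ∀ i : Fin (b n), u (blockStarts b n + i) = decide (i = f n) := fun i => by
    rw [← unaryCode_apply hb f i]
    refine (h ⟨Nat.le_add_right _ _, ?_⟩).symm
    rw [blockStarts_succ]
    exact Nat.add_lt_add_left i.isLt _
  have hex : ∃ i : Fin (b n), u (blockStarts b n + i) = true := ⟨f n, by simp [hu]⟩
  rw [unaryDecode, dif_pos hex]
  have := hex.choose_spec
  rwa [hu, decide_eq_true_iff] at this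

def IsEqBounded {b : ℕ → ℕ} (F : Set (∀ n, Fin (b n))) : Prop :=
  ∃ r : ℕ → ℕ, ∃ h : ∀ n, Fin (b n), IsIntervalPartition r ∧ ∀ f ∈ F, SqBullet f r h

theorem exists_not_isEqBounded_of_not_isMeagerAdditive {Y : Set Cantor}
    (hY : ¬IsMeagerAdditive Y) : ∃ b : ℕ → ℕ, (∀ n, 2 ≤ b n) ∧
      ∃ F : Set (∀ n, Fin (b n)), #F ≤ #Y ∧ ¬IsEqBounded F := by
  obtain ⟨A, hA, hAY⟩ : ∃ A, IsMeagre A ∧ ¬IsMeagre (cantorSum A Y) := by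
    simpa [IsMeagerAdditive] using hY
  obtain ⟨r, y, hr, hAr⟩ := hA.exists_subset_blockMeager strictMono_id
  refine ⟨fun n => 2 ^ (r (n + 1) - r n), fun n => Nat.le_self_pow ?_ 2, blockCode r '' Y,
    mk_image_le, ?_⟩
  · exact Nat.sub_ne_zero_of_lt (hr.2 (lt_add_one n))
  rintro ⟨s, h, hs, hYs⟩
  refine hAY ((isMeagre_blockMeager (hr.2.comp hs.2) _).mono
    (cantorSum_subset_blockMeager (z := blockDecode r h) hr.2.monotone hs.2 hAr fun x hx => ?_))
  filter_upwards [hYs _ (mem_image_of_mem _ hx)] with m ⟨k, hk₁, hk₂, hk⟩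
  exact ⟨k, hk₁, hk₂, eqOn_blockDecode hr.2 hk⟩

theorem exists_not_isMeagerAdditive_of_not_isEqBounded {b : ℕ → ℕ} (hb : ∀ n, 0 < b n)
    {F : Set (∀ n, Fin (b n))} (hF : ¬IsEqBounded F) :
    ∃ Y : Set Cantor, ¬IsMeagerAdditive Y ∧ #Y ≤ #F := by
  have hr := strictMono_blockStarts hb
  refine ⟨unaryCode b '' F, fun hMA => hF ?_, mk_image_le⟩
  obtain ⟨s, u, hs, hsub⟩ :=
    (hMA _ (isMeagre_blockMeager hr fun _ => false)).exists_subset_blockMeager hr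
  refine ⟨s, unaryDecode hb u, hs, fun f hf => ?_⟩
  have hf_sub :
      blockMeager (blockStarts b) (unaryCode b f) ⊆ blockMeager (blockStarts b ∘ s) u := by
    intro a ha
    refine hsub ⟨fun i => xor (a i) (unaryCode b f i), ?_, _, mem_image_of_mem _ hf, by simp⟩
    filter_upwards [ha] with n hn hn'
    exact hn fun i hi => by simpa using hn' hi
  filter_upwards [eventually_exists_eqOn_of_blockMeager_subset hr (hr.comp hs.2) hf_sub]
    with n ⟨k, hk₁, hk₂, hk⟩
  exact ⟨k, hr.le_iff_le.mp hk₁, hr.le_iff_le.mp hk₂, (unaryDecode_eq hb hk.symm).symm⟩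

lemma not_isEqBounded_univ {b : ℕ → ℕ} (hb : ∀ n, 2 ≤ b n) :
    ¬IsEqBounded (Set.univ : Set (∀ n, Fin (b n))) := by
  rintro ⟨r, h, -, hr⟩
  have : ∀ n, Nontrivial (Fin (b n)) := fun n => Fin.nontrivial_iff_two_le.mpr (hb n)
  choose f hf using fun n => exists_ne (h n)
  obtain ⟨_, k, -, -, hk⟩ := (hr f (mem_univ f)).exists
  exact hf k hk

lemma not_isMeagerAdditive_univ : ¬IsMeagerAdditive Set.univ := by
  intro hMA
  let A := blockMeager id fun _ => false
  have hA : (fun _ => true) ∈ A := Eventually.of_forall fun n hn => by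
    simpa using hn (left_mem_Ico.mpr (lt_add_one n))
  have hsum : cantorSum A Set.univ = Set.univ :=
    eq_univ_of_forall fun w => ⟨_, hA, fun i => !(w i), mem_univ _, by simp⟩
  have := hMA A (isMeagre_blockMeager strictMono_id _)
  rw [hsum] at this
  exact not_isMeagre_of_isOpen isOpen_univ univ_nonempty this

lemma nonMA_le_mk {Y : Set Cantor} (hY : ¬IsMeagerAdditive Y) : nonMA ≤ #Y :=
  csInf_le' (show #Y ∈ {c | ∃ Y : Set Cantor, #Y = c ∧ ¬IsMeagerAdditive Y} from ⟨Y, rfl, hY⟩)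

lemma exists_mk_eq_nonMA : ∃ Y : Set Cantor, #Y = nonMA ∧ ¬IsMeagerAdditive Y :=
  csInf_mem (⟨_, Set.univ, rfl, not_isMeagerAdditive_univ⟩ :
    {c | ∃ Y : Set Cantor, #Y = c ∧ ¬IsMeagerAdditive Y}.Nonempty)

lemma bEq_le_mk {b : ℕ → ℕ} {F : Set (∀ n, Fin (b n))} (hF : ¬IsEqBounded F) : bEq b ≤ #F :=
  csInf_le' (show #F ∈ {c | ∃ F : Set (∀ n, Fin (b n)), #F = c ∧ ¬IsEqBounded F} from
    ⟨F, rfl, hF⟩)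

lemma exists_mk_eq_bEq {b : ℕ → ℕ} (hb : ∀ n, 2 ≤ b n) :
    ∃ F : Set (∀ n, Fin (b n)), #F = bEq b ∧ ¬IsEqBounded F :=
  csInf_mem (⟨_, Set.univ, rfl, not_isEqBounded_univ hb⟩ :
    {c | ∃ F : Set (∀ n, Fin (b n)), #F = c ∧ ¬IsEqBounded F}.Nonempty)

/-- `non(MA) = min{𝔟_b^eq : b ∈ ω^ω, b(n) ≥ 2 for all n}`, where `MA` is the ideal of
meager-additive subsets of `2^ω`. -/
theorem nonMA_eq_min_bEq :
    nonMA = sInf {c : Cardinal | ∃ b : ℕ → ℕ, (∀ n, 2 ≤ b n) ∧ bEq b = c} := by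
  apply le_antisymm
  · refine le_csInf ⟨_, fun _ => 2, fun _ => le_rfl, rfl⟩ ?_
    rintro _ ⟨b, hb, rfl⟩
    obtain ⟨F, hF, hF_unbdd⟩ := exists_mk_eq_bEq hb
    obtain ⟨Y, hY, hYF⟩ :=
      exists_not_isMeagerAdditive_of_not_isEqBounded (fun n => two_pos.trans_le (hb n)) hF_unbdd
    exact (nonMA_le_mk hY).trans (hYF.trans hF.le)
  · obtain ⟨Y, hY, hY_nma⟩ := exists_mk_eq_nonMA
    obtain ⟨b, hb, F, hFY, hF⟩ := exists_not_isEqBounded_of_not_isMeagerAdditive hY_nma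
    exact le_trans (csInf_le' ⟨b, hb, rfl⟩) ((bEq_le_mk hF).trans (hFY.trans hY.le))
end

section
/- For every b : ω → ω, the poset ℙ_b is σ-centered, i.e. ℙ_b is the union of countably many centered subsets (a subset Q of a poset is centered if every finite subset of Q has a common lower bound in the poset). -/
/-- A condition `p = (s,t,F)` of the poset `ℙ_b`: `s` is a finite strictly increasing
sequence of naturals with `s(0) > 0` (when non-empty), `t ∈ Seq_{<ω}(b)`, and `F` is a
finite subset of `∏b`. -/
structure PbCond (b : ℕ → ℕ) where
  s : List ℕ
  t : List ℕ
  F : Finset (∀ n, Fin (b n))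
  hs_mono : s.Chain' (· < ·)
  hs_pos : ∀ h : s ≠ [], 0 < s.head h
  ht : ∀ (i : ℕ) (h : i < t.length), t[i] < b i

/-- The order of `ℙ_b`: `(s',t',F') ≤ (s,t,F)` iff `s ⊑ s'`, `t ⊑ t'`, `F ⊆ F'`, and for
every `f ∈ F` and every `n` with `|s| ≤ n < |s'|` there is `k ∈ [s'(n−1), s'(n))` with
`f(k) = t'(k)` (where `s'(−1) := 0`). -/
def PbLe {b : ℕ → ℕ} (q p : PbCond b) : Prop :=
  p.s <+: q.s ∧ p.t <+: q.t ∧ p.F ⊆ q.F ∧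
  ∀ f ∈ p.F, ∀ n : ℕ, p.s.length ≤ n → ∀ hn : n < q.s.length,
    ∃ k : ℕ, (if n = 0 then 0 else q.s[n - 1]'(by omega)) ≤ k ∧ k < q.s[n] ∧
      q.t[k]? = some ((f k : ℕ))

/-- For every `b : ω → ω`, the poset `ℙ_b` is σ-centered: it is a countable union of
centered sets (every finite subset of a centered set has a common lower bound). -/
theorem Pb_sigmaCentered (b : ℕ → ℕ) :
    ∃ Q : ℕ → Set (PbCond b),
      (∀ p : PbCond b, ∃ n, p ∈ Q n) ∧
      ∀ n : ℕ, ∀ S : Set (PbCond b), S ⊆ Q n → S.Finite →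
        ∃ q : PbCond b, ∀ p ∈ S, PbLe q p := by
  classical
  refine ⟨fun n => {p | Encodable.encode (p.s, p.t) = n}, fun p => ⟨_, rfl⟩, ?_⟩
  intro n S hSQ hSfin
  rcases S.eq_empty_or_nonempty with rfl | ⟨p₀, hp₀⟩
  · exact ⟨⟨[], [], ∅, List.isChain_nil, fun h => absurd rfl h, fun i h => by simp at h⟩,
      fun p hp => hp.elim⟩
  · have hst : ∀ p ∈ S, p.s = p₀.s ∧ p.t = p₀.t := by
      intro p hp
      have h1 := hSQ hp
      have h2 := hSQ hp₀
      have : (p.s, p.t) = (p₀.s, p₀.t) := Encodable.encode_injective (h1.trans h2.symm)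
      exact ⟨congrArg Prod.fst this, congrArg Prod.snd this⟩
    refine ⟨⟨p₀.s, p₀.t, hSfin.toFinset.biUnion (·.F), p₀.hs_mono, p₀.hs_pos, p₀.ht⟩,
      fun p hp => ?_⟩
    obtain ⟨hs, ht⟩ := hst p hp
    refine ⟨by simp [hs], by simp [ht], ?_, ?_⟩
    · intro f hf
      simp only [Finset.mem_biUnion, Set.Finite.mem_toFinset]
      exact ⟨p, hp, hf⟩
    · intro f _ m hm hm'
      rw [hs] at hm; simp only at hm'
      omega
end
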